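/- arXiv:2002.12874 — 7 statements merged into one kernel-verified Lean document; each statement's English description precedes it below -/
import Mathlib

section
/- Let F ∈ ℤ[[x,y,s1,s2]] be the power series of Lemma 2.1 (coefficient of x^i y^j counts bicolored Motzkin paths with d+h1 = i and u+h2 = j), viewed in the four-variable ring, and let G ∈ ℤ[[x,y,s1,s2]] be the power series in which the coefficient of x^i y^j s1^k s2^m is the number of bicolored grand Motzkin paths M with d(M)+h1(M) = i, u(M)+h2(M) = j, h1⁰(M) = k, and h2⁰(M) = m. Then G·(1 − s1·x − s2·y − 2xy·F) = 1 in ℤ[[x,y,s1,s2]]. (Equivalently, G = 1/((1−s1)x + (1−s2)y + √((1−x−y)²−4xy)).) -/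
/-- Steps of a bicolored (grand) Motzkin path: up, down, and two colors of horizontal steps. -/
inductive BStep : Type
  | U | D | H1 | H2
  deriving DecidableEq

/-- A bicolored Motzkin path: a word over {U,D,H1,H2} such that every prefix has at
least as many U's as D's, and the whole word has equally many U's and D's. -/
def IsBicoloredMotzkin (w : List BStep) : Prop :=
  (∀ j, (w.take j).count BStep.D ≤ (w.take j).count BStep.U) ∧
    w.count BStep.U = w.count BStep.D

/-- A bicolored grand Motzkin path: a word over {U,D,H1,H2} with equally many U's and D's
(the path may go below the x-axis). -/
def IsBicoloredGrandMotzkin (w : List BStep) : Prop :=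
  w.count BStep.U = w.count BStep.D

/-- The number of `H1` steps of `w` lying on the x-axis, i.e. whose starting height
(number of earlier U's minus earlier D's) is `0`. -/
def h1zero (w : List BStep) : ℕ :=
  ((Finset.range w.length).filter fun i =>
    w.getD i BStep.U = BStep.H1 ∧ (w.take i).count BStep.U = (w.take i).count BStep.D).card

/-- The number of `H2` steps of `w` lying on the x-axis. -/
def h2zero (w : List BStep) : ℕ :=
  ((Finset.range w.length).filter fun i =>
    w.getD i BStep.U = BStep.H2 ∧ (w.take i).count BStep.U = (w.take i).count BStep.D).card

/-- The series `F` of Lemma 2.1 (coefficient of `x^i y^j` counts bicolored Motzkin paths with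
`d+h1 = i`, `u+h2 = j`), viewed in `ℤ[[x,y,s1,s2]]`.
Variables: `0 = x`, `1 = y`, `2 = s1`, `3 = s2`. -/
noncomputable def F : MvPowerSeries (Fin 4) ℤ := fun d =>
  if d 2 = 0 ∧ d 3 = 0 then
    ({w : List BStep | IsBicoloredMotzkin w ∧
        w.count BStep.D + w.count BStep.H1 = d 0 ∧
        w.count BStep.U + w.count BStep.H2 = d 1}.ncard : ℤ)
  else 0

/-- The series `G ∈ ℤ[[x,y,s1,s2]]` whose coefficient of `x^i y^j s1^k s2^m` is the number of
bicolored grand Motzkin paths `M` with `d(M)+h1(M) = i`, `u(M)+h2(M) = j`, `h1⁰(M) = k`,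
`h2⁰(M) = m`. -/
noncomputable def G : MvPowerSeries (Fin 4) ℤ := fun d =>
  ({w : List BStep | IsBicoloredGrandMotzkin w ∧
      w.count BStep.D + w.count BStep.H1 = d 0 ∧
      w.count BStep.U + w.count BStep.H2 = d 1 ∧
      h1zero w = d 2 ∧ h2zero w = d 3}.ncard : ℤ)

/-!
Cutting a grand Motzkin path at its first return to the x-axis writes it uniquely as a primitive
path (nonempty, touching the axis only at its ends) followed by a grand Motzkin path. The
primitive part ends at height 0, so all four statistics add, and `G = 1 + P·G` where `P` is the
series of primitive paths. A primitive path is a single `H1` or `H2` step on the axis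
(`s1·x`, `s2·y`), an arch `U M D` over a Motzkin path `M`, whose horizontal steps all lie above
the axis (`xy·F`), or the mirror image of such an arch (`xy·F` again), so `P = s1x + s2y + 2xyF`.
-/

section GenSeries

open Finset

variable {α β σ : Type*}

noncomputable def genSeries (wt : α → σ →₀ ℕ) (S : Set α) : MvPowerSeries σ ℤ :=
  fun d => ({a ∈ S | wt a = d}.ncard : ℤ)

theorem coeff_genSeries (wt : α → σ →₀ ℕ) (S : Set α) (d : σ →₀ ℕ) :
    MvPowerSeries.coeff d (genSeries wt S) = ({a ∈ S | wt a = d}.ncard : ℤ) := rfl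

theorem genSeries_singleton [DecidableEq σ] (wt : α → σ →₀ ℕ) (a : α) :
    genSeries wt {a} = MvPowerSeries.monomial (wt a) 1 := by
  ext d
  rw [coeff_genSeries, MvPowerSeries.coeff_monomial]
  by_cases h : wt a = d
  · rw [if_pos h.symm, Nat.cast_eq_one, Set.ncard_eq_one]
    exact ⟨a, Set.ext fun b =>
      ⟨fun hb => hb.1, fun hb => ⟨hb, (congrArg wt hb).trans h⟩⟩⟩
  · rw [if_neg (Ne.symm h), Nat.cast_eq_zero, Set.ncard_eq_zero]
    exact Set.eq_empty_of_forall_notMem fun b hb => h (hb.1 ▸ hb.2)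

theorem genSeries_union {wt : α → σ →₀ ℕ} (hwt : ∀ d, {a | wt a = d}.Finite)
    {S T : Set α} (hST : Disjoint S T) :
    genSeries wt (S ∪ T) = genSeries wt S + genSeries wt T := by
  ext d
  have hfib : {a ∈ S ∪ T | wt a = d} = {a ∈ S | wt a = d} ∪ {a ∈ T | wt a = d} :=
    Set.ext fun _ => or_and_right
  rw [map_add, coeff_genSeries, coeff_genSeries, coeff_genSeries, hfib,
    Set.ncard_union_eq (hST.mono (fun _ h => h.1) (fun _ h => h.1))
      ((hwt d).subset fun _ h => h.2) ((hwt d).subset fun _ h => h.2), Nat.cast_add]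

theorem genSeries_image {wt : β → σ →₀ ℕ} {wt' : α → σ →₀ ℕ} {f : α → β} {S : Set α}
    (hf : Set.InjOn f S) (hw : ∀ a ∈ S, wt (f a) = wt' a) :
    genSeries wt (f '' S) = genSeries wt' S := by
  ext d
  have hfib : {b ∈ f '' S | wt b = d} = f '' {a ∈ S | wt' a = d} := by
    ext b
    constructor
    · rintro ⟨⟨a, ha, rfl⟩, hd⟩
      exact ⟨a, ⟨ha, hw a ha ▸ hd⟩, rfl⟩
    · rintro ⟨a, ⟨ha, hd⟩, rfl⟩
      exact ⟨⟨a, ha, rfl⟩, (hw a ha).trans hd⟩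
  rw [coeff_genSeries, coeff_genSeries, hfib, (hf.mono fun _ h => h.1).ncard_image]

theorem genSeries_const_add (e : σ →₀ ℕ) (wt : α → σ →₀ ℕ) (S : Set α) :
    genSeries (fun a => e + wt a) S = MvPowerSeries.monomial e 1 * genSeries wt S := by
  ext d
  rw [MvPowerSeries.coeff_monomial_mul, coeff_genSeries, coeff_genSeries]
  split_ifs with hle
  · rw [one_mul]
    congr 3
    ext a
    simp only [eq_tsub_iff_add_eq_of_le hle, add_comm (wt a)]
  · have : {a ∈ S | e + wt a = d} = ∅ :=
      Set.eq_empty_of_forall_notMem fun a ha => hle (ha.2 ▸ le_self_add)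
    simp [this]

theorem genSeries_prod [DecidableEq σ] {wa : α → σ →₀ ℕ} {wb : β → σ →₀ ℕ}
    (hwa : ∀ d, {a | wa a = d}.Finite) (hwb : ∀ d, {b | wb b = d}.Finite)
    (S : Set α) (T : Set β) :
    genSeries (fun x => wa x.1 + wb x.2) (S ×ˢ T) = genSeries wa S * genSeries wb T := by
  classical
  ext d
  have hfS (p : σ →₀ ℕ) : {a ∈ S | wa a = p}.Finite := (hwa p).subset fun _ h => h.2
  have hfT (q : σ →₀ ℕ) : {b ∈ T | wb b = q}.Finite := (hwb q).subset fun _ h => h.2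
  set fiber : (σ →₀ ℕ) × (σ →₀ ℕ) → Finset (α × β) :=
    fun pq => (hfS pq.1).toFinset ×ˢ (hfT pq.2).toFinset
  have hfib : {x ∈ S ×ˢ T | wa x.1 + wb x.2 = d} = ↑((antidiagonal d).biUnion fiber) := by
    ext ⟨a, b⟩
    simp [fiber, HasAntidiagonal.mem_antidiagonal, and_comm, and_assoc, and_left_comm]
  have hdisj : (↑(antidiagonal d) : Set _).PairwiseDisjoint fiber := by
    intro pq _ pq' _ hne
    refine Finset.disjoint_left.2 fun x hx hx' => hne ?_
    simp only [fiber, Finset.mem_product, Set.Finite.mem_toFinset] at hx hx'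
    exact Prod.ext (hx.1.2.symm.trans hx'.1.2) (hx.2.2.symm.trans hx'.2.2)
  rw [coeff_genSeries, MvPowerSeries.coeff_mul, hfib, Set.ncard_coe_finset, card_biUnion hdisj,
    Nat.cast_sum]
  refine sum_congr rfl fun pq _ => ?_
  rw [card_product, Nat.cast_mul, coeff_genSeries, coeff_genSeries,
    Set.ncard_eq_toFinset_card _ (hfS _), Set.ncard_eq_toFinset_card _ (hfT _)]

end GenSeries

theorem MvPowerSeries.X_mul_X_eq_monomial {σ R : Type*} [Semiring R] (i j : σ) :
    (X i * X j : MvPowerSeries σ R) = monomial (Finsupp.single i 1 + Finsupp.single j 1) 1 := by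
  rw [X, X, monomial_mul_monomial, mul_one]

namespace BStep

instance : Fintype BStep := ⟨{U, D, H1, H2}, fun a => by cases a <;> simp⟩

def rise : BStep → ℤ
  | U => 1
  | D => -1
  | H1 => 0
  | H2 => 0

def reflect : BStep → BStep
  | U => D
  | D => U
  | H1 => H1
  | H2 => H2

theorem reflect_involutive : Function.Involutive reflect := by
  intro a; cases a <;> rfl

theorem rise_reflect (a : BStep) : rise (reflect a) = -rise a := by
  cases a <;> rfl

theorem neg_one_le_rise (a : BStep) : -1 ≤ rise a := by
  cases a <;> decide

theorem rise_eq_neg_one_iff {a : BStep} : rise a = -1 ↔ a = D := by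
  cases a <;> decide

def height (w : List BStep) : ℤ := w.count U - w.count D

@[simp]
theorem height_nil : height [] = 0 := by
  simp [height]

@[simp]
theorem height_cons (a : BStep) (w : List BStep) : height (a :: w) = rise a + height w := by
  cases a <;> simp [height, rise] <;> ring

@[simp]
theorem height_append (v w : List BStep) : height (v ++ w) = height v + height w := by
  induction v with
  | nil => simp
  | cons a v ih => simp [ih, add_assoc]

theorem height_map_reflect (w : List BStep) : height (w.map reflect) = -height w := by
  induction w with
  | nil => simp
  | cons a w ih => rw [List.map_cons, height_cons, height_cons, rise_reflect, ih]; ring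

theorem height_take_succ {w : List BStep} {i : ℕ} (h : i < w.length) :
    height (w.take (i + 1)) = height (w.take i) + rise w[i] := by
  rw [List.take_add_one, List.getElem?_eq_getElem h, Option.toList_some, height_append,
    height_cons, height_nil, add_zero]

theorem height_eq_zero_iff {w : List BStep} : height w = 0 ↔ w.count U = w.count D := by
  rw [height, sub_eq_zero, Nat.cast_inj]

theorem isBicoloredGrandMotzkin_iff {w : List BStep} :
    IsBicoloredGrandMotzkin w ↔ height w = 0 :=
  height_eq_zero_iff.symm

theorem isBicoloredMotzkin_iff {w : List BStep} :
    IsBicoloredMotzkin w ↔ (∀ i, 0 ≤ height (w.take i)) ∧ height w = 0 := by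
  refine and_congr (forall_congr' fun i => ?_) height_eq_zero_iff.symm
  rw [height]
  omega

theorem length_eq_count_add (w : List BStep) :
    w.length = w.count U + w.count D + w.count H1 + w.count H2 := by
  induction w with
  | nil => rfl
  | cons a w ih => cases a <;> simp [ih] <;> omega

def countAt (s : BStep) (c : ℤ) (w : List BStep) : ℕ :=
  ((Finset.range w.length).filter fun i => w.getD i U = s ∧ height (w.take i) = c).card

theorem h1zero_eq_countAt (w : List BStep) : h1zero w = countAt H1 0 w := by
  simp only [h1zero, countAt, height_eq_zero_iff]

theorem h2zero_eq_countAt (w : List BStep) : h2zero w = countAt H2 0 w := by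
  simp only [h2zero, countAt, height_eq_zero_iff]

@[simp]
theorem countAt_nil (s : BStep) (c : ℤ) : countAt s c [] = 0 := rfl

theorem countAt_cons (s a : BStep) (c : ℤ) (w : List BStep) :
    countAt s c (a :: w) = (if a = s ∧ c = 0 then 1 else 0) + countAt s (c - rise a) w := by
  rw [countAt, Finset.card_filter, List.length_cons, Finset.sum_range_succ', add_comm,
    countAt, Finset.card_filter]
  congr 1
  · simp [eq_comm]
  · refine Finset.sum_congr rfl fun i _ => ?_
    simp [eq_sub_iff_add_eq']

theorem countAt_append (s : BStep) (c : ℤ) (v w : List BStep) :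
    countAt s c (v ++ w) = countAt s c v + countAt s (c - height v) w := by
  induction v generalizing c with
  | nil => simp
  | cons a v ih => simp [countAt_cons, ih, sub_sub, add_assoc]

theorem countAt_eq_zero {s : BStep} {c : ℤ} {w : List BStep}
    (h : ∀ i, height (w.take i) ≠ c) : countAt s c w = 0 :=
  Finset.card_eq_zero.2 <| Finset.filter_eq_empty_iff.2 fun i _ hi => h i hi.2

theorem countAt_map_reflect (s : BStep) (c : ℤ) (w : List BStep) :
    countAt (reflect s) (-c) (w.map reflect) = countAt s c w := by
  induction w generalizing c with
  | nil => rfl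
  | cons a w ih =>
    have hc : -c - rise (reflect a) = -(c - rise a) := by rw [rise_reflect]; ring
    simp only [List.map_cons, countAt_cons, hc, ih, reflect_involutive.injective.eq_iff,
      neg_eq_zero]

noncomputable def weight (w : List BStep) : Fin 4 →₀ ℕ :=
  Finsupp.equivFunOnFinite.symm
    ![w.count D + w.count H1, w.count U + w.count H2, h1zero w, h2zero w]

noncomputable def xyWeight (w : List BStep) : Fin 4 →₀ ℕ :=
  Finsupp.equivFunOnFinite.symm ![w.count D + w.count H1, w.count U + w.count H2, 0, 0]

theorem weight_eq_iff {w : List BStep} {d : Fin 4 →₀ ℕ} :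
    weight w = d ↔ w.count D + w.count H1 = d 0 ∧ w.count U + w.count H2 = d 1 ∧
      h1zero w = d 2 ∧ h2zero w = d 3 := by
  simp [Finsupp.ext_iff, Fin.forall_fin_succ, weight]

theorem xyWeight_eq_iff {w : List BStep} {d : Fin 4 →₀ ℕ} :
    xyWeight w = d ↔ w.count D + w.count H1 = d 0 ∧ w.count U + w.count H2 = d 1 ∧
      0 = d 2 ∧ 0 = d 3 := by
  simp [Finsupp.ext_iff, Fin.forall_fin_succ, xyWeight]

theorem finite_setOf_weight_eq (d : Fin 4 →₀ ℕ) : {w | weight w = d}.Finite :=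
  (List.finite_length_le BStep (d 0 + d 1)).subset fun w hw => by
    obtain ⟨h0, h1, -⟩ := weight_eq_iff.1 hw
    change w.length ≤ d 0 + d 1
    rw [length_eq_count_add]
    omega

theorem G_eq_genSeries : G = genSeries weight {w | height w = 0} := by
  ext d
  rw [coeff_genSeries]
  change (({w | _} : Set (List BStep)).ncard : ℤ) = _
  simp only [weight_eq_iff, isBicoloredGrandMotzkin_iff]
  rfl

theorem F_eq_genSeries : F = genSeries xyWeight {w | IsBicoloredMotzkin w} := by
  ext d
  rw [coeff_genSeries]
  change (if d 2 = 0 ∧ d 3 = 0 then (({w | _} : Set (List BStep)).ncard : ℤ) else 0) = _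
  split_ifs with hd
  · simp only [xyWeight_eq_iff, hd, and_true]
    rfl
  · rw [eq_comm, Nat.cast_eq_zero]
    convert Set.ncard_empty (List BStep)
    exact Set.eq_empty_of_forall_notMem fun w hw =>
      hd ⟨(xyWeight_eq_iff.1 hw.2).2.2.1.symm, (xyWeight_eq_iff.1 hw.2).2.2.2.symm⟩

@[simp]
theorem weight_nil : weight [] = 0 := by
  simp [weight_eq_iff, h1zero, h2zero]

theorem weight_append {v : List BStep} (hv : height v = 0) (w : List BStep) :
    weight (v ++ w) = weight v + weight w := by
  ext i
  fin_cases i <;>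
    simp [weight, h1zero_eq_countAt, h2zero_eq_countAt, countAt_append, hv] <;> ring

theorem weight_map_reflect {w : List BStep} (hw : height w = 0) :
    weight (w.map reflect) = weight w := by
  have hcount (a : BStep) : (w.map reflect).count (reflect a) = w.count a :=
    List.count_map_of_injective w reflect reflect_involutive.injective a
  have hzero (s : BStep) (hs : reflect s = s) :
      countAt s 0 (w.map reflect) = countAt s 0 w := by
    simpa [hs] using countAt_map_reflect s 0 w
  have hUD := height_eq_zero_iff.1 hw
  ext i
  fin_cases i
  · simpa [weight, reflect, hUD] using congrArg₂ (· + ·) (hcount U) (hcount H1)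
  · simpa [weight, reflect, hUD] using congrArg₂ (· + ·) (hcount D) (hcount H2)
  · simpa [weight, h1zero_eq_countAt] using hzero H1 rfl
  · simpa [weight, h2zero_eq_countAt] using hzero H2 rfl

def IsPrimitive (w : List BStep) : Prop :=
  w ≠ [] ∧ height w = 0 ∧ ∀ i, 0 < i → i < w.length → height (w.take i) ≠ 0

def arch (m : List BStep) : List BStep := U :: (m ++ [D])

theorem height_arch_of_height_eq_zero {m : List BStep} (hm : height m = 0) :
    height (arch m) = 0 := by
  simp [arch, hm, rise]

theorem isPrimitive_singleton {a : BStep} (ha : rise a = 0) : IsPrimitive [a] :=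
  ⟨List.cons_ne_nil a [], by simp [ha],
    fun i hi hi' => by rw [List.length_singleton] at hi'; omega⟩

theorem isPrimitive_arch {m : List BStep} (hm : IsBicoloredMotzkin m) : IsPrimitive (arch m) := by
  obtain ⟨hpre, hm0⟩ := isBicoloredMotzkin_iff.1 hm
  refine ⟨List.cons_ne_nil _ _, height_arch_of_height_eq_zero hm0, fun i hi hlt => ?_⟩
  obtain ⟨j, rfl⟩ := Nat.exists_eq_add_of_lt hi
  simp only [arch, zero_add, List.length_cons, List.length_append, List.length_nil] at hlt ⊢
  rw [List.take_succ_cons, List.take_append_of_le_length (by omega), height_cons]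
  have := hpre j
  simp only [rise]
  omega

theorem isPrimitive_map_reflect_iff {w : List BStep} :
    IsPrimitive (w.map reflect) ↔ IsPrimitive w := by
  simp [IsPrimitive, ← List.map_take, height_map_reflect]

theorem IsPrimitive.eq_nil_of_cons {a : BStep} {r : List BStep} (hp : IsPrimitive (a :: r))
    (ha : rise a = 0) : r = [] := by
  by_contra hr
  exact hp.2.2 1 one_pos (by simpa [List.length_pos_iff] using hr) (by simp [ha])

theorem IsPrimitive.height_take_pos {r : List BStep} (hp : IsPrimitive (U :: r)) :
    ∀ i, 0 < i → i ≤ r.length → 0 < height ((U :: r).take i)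
  | 0, h, _ => absurd h (lt_irrefl 0)
  | 1, _, _ => by simp [rise]
  | i + 2, _, hi => by
    have hprev := hp.height_take_pos (i + 1) i.succ_pos (by omega)
    have hne := hp.2.2 (i + 2) (by omega) (by simp; omega)
    rw [height_take_succ (by simp; omega)] at hne ⊢
    have := neg_one_le_rise ((U :: r)[i + 1]'(by simp; omega))
    omega

theorem IsPrimitive.exists_eq_arch {r : List BStep} (hp : IsPrimitive (U :: r)) :
    ∃ m, IsBicoloredMotzkin m ∧ U :: r = arch m := by
  obtain rfl | ⟨m, z, rfl⟩ := r.eq_nil_or_concat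
  · exact absurd hp.2.1 (by simp [rise])
  have hpos (j : ℕ) (hj : j ≤ m.length) : 0 < 1 + height (m.take j) := by
    have := hp.height_take_pos (j + 1) j.succ_pos (by simp; omega)
    rwa [List.take_succ_cons, List.concat_eq_append, List.take_append_of_le_length hj,
      height_cons] at this
  have hm0 : 0 ≤ height m := by
    have := hpos m.length le_rfl
    rw [List.take_length] at this
    omega
  have htotal := hp.2.1
  rw [List.concat_eq_append, height_cons, height_append, height_cons, height_nil] at htotal
  have hU : rise U = 1 := rfl
  have hz : rise z = -1 := by have := neg_one_le_rise z; omega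
  refine ⟨m, isBicoloredMotzkin_iff.2 ⟨fun j => ?_, by omega⟩, ?_⟩
  · rcases le_or_gt j m.length with hj | hj
    · have := hpos j hj; omega
    · rw [List.take_of_length_le hj.le]; exact hm0
  · rw [rise_eq_neg_one_iff.1 hz, List.concat_eq_append, arch]

theorem setOf_isPrimitive : {p | IsPrimitive p} =
    {[H1]} ∪ {[H2]} ∪ arch '' {m | IsBicoloredMotzkin m} ∪
      List.map reflect '' (arch '' {m | IsBicoloredMotzkin m}) := by
  ext p
  constructor
  · intro hp
    match p, hp with
    | [], hp => exact absurd rfl hp.1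
    | U :: r, hp =>
      obtain ⟨m, hm, h⟩ := hp.exists_eq_arch
      exact Or.inl (Or.inr ⟨m, hm, h.symm⟩)
    | D :: r, hp =>
      obtain ⟨m, hm, h⟩ := (isPrimitive_map_reflect_iff.2 hp).exists_eq_arch
      refine Or.inr ⟨arch m, ⟨m, hm, rfl⟩, ?_⟩
      rw [← h, List.map_cons, List.map_map, reflect_involutive.comp_self, List.map_id]
      rfl
    | H1 :: r, hp => exact Or.inl (Or.inl (Or.inl (by rw [hp.eq_nil_of_cons rfl]; rfl)))
    | H2 :: r, hp => exact Or.inl (Or.inl (Or.inr (by rw [hp.eq_nil_of_cons rfl]; rfl)))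
  · rintro (((rfl | rfl) | ⟨m, hm, rfl⟩) | ⟨_, ⟨m, hm, rfl⟩, rfl⟩)
    · exact isPrimitive_singleton rfl
    · exact isPrimitive_singleton rfl
    · exact isPrimitive_arch hm
    · exact isPrimitive_map_reflect_iff.2 (isPrimitive_arch hm)

theorem IsPrimitive.length_le_of_append_eq {p q t s : List BStep} (hp : IsPrimitive p)
    (hq : q ≠ []) (hq0 : height q = 0) (h : p ++ t = q ++ s) : p.length ≤ q.length := by
  by_contra! hlt
  have hpq : p.take q.length = q := by
    rw [← List.take_append_of_le_length hlt.le, h, List.take_left]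
  exact hp.2.2 q.length (List.length_pos_iff.2 hq) hlt (by rw [hpq]; exact hq0)

theorem injOn_append_of_isPrimitive (T : Set (List BStep)) :
    Set.InjOn (fun x : List BStep × List BStep => x.1 ++ x.2) ({p | IsPrimitive p} ×ˢ T) := by
  rintro ⟨p, t⟩ ⟨hp, -⟩ ⟨q, s⟩ ⟨hq, -⟩ h
  have hlen : p.length = q.length :=
    le_antisymm (hp.length_le_of_append_eq hq.1 hq.2.1 h)
      (hq.length_le_of_append_eq hp.1 hp.2.1 h.symm)
  obtain ⟨rfl, rfl⟩ := List.append_inj h hlen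
  rfl

theorem exists_isPrimitive_append {w : List BStep} (hw : height w = 0) (hne : w ≠ []) :
    ∃ p t, IsPrimitive p ∧ height t = 0 ∧ p ++ t = w := by
  classical
  have hex : ∃ k, 0 < k ∧ height (w.take k) = 0 :=
    ⟨w.length, List.length_pos_iff.2 hne, by rwa [List.take_length]⟩
  obtain ⟨hk, hk0⟩ := Nat.find_spec hex
  have hkle : Nat.find hex ≤ w.length :=
    Nat.find_min' hex ⟨List.length_pos_iff.2 hne, by rwa [List.take_length]⟩
  refine ⟨w.take (Nat.find hex), w.drop (Nat.find hex), ⟨?_, hk0, fun i hi hlt => ?_⟩, ?_,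
    List.take_append_drop _ _⟩
  · simp [List.take_eq_nil_iff, hk.ne', hne]
  · rw [List.length_take, min_eq_left hkle] at hlt
    rw [List.take_take, min_eq_left hlt.le]
    exact fun h => Nat.find_min hex hlt ⟨hi, h⟩
  · have := height_append (w.take (Nat.find hex)) (w.drop (Nat.find hex))
    rw [List.take_append_drop, hw, hk0] at this
    omega

theorem setOf_height_eq_zero : {w | height w = 0} =
    {[]} ∪ (fun x => x.1 ++ x.2) '' ({p | IsPrimitive p} ×ˢ {w | height w = 0}) := by
  ext w
  constructor
  · intro hw
    rcases eq_or_ne w [] with rfl | hne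
    · exact Or.inl rfl
    · obtain ⟨p, t, hp, ht, rfl⟩ := exists_isPrimitive_append hw hne
      exact Or.inr ⟨(p, t), ⟨hp, ht⟩, rfl⟩
  · rintro (rfl | ⟨⟨p, t⟩, ⟨hp, ht⟩, rfl⟩)
    · exact height_nil
    · exact (height_append p t).trans (by rw [hp.2.1, ht, add_zero])

theorem genSeries_height_eq_zero :
    genSeries weight {w | height w = 0} =
      1 + genSeries weight {p | IsPrimitive p} * genSeries weight {w | height w = 0} := by
  have hdisj : Disjoint {([] : List BStep)}
      ((fun x => x.1 ++ x.2) '' ({p | IsPrimitive p} ×ˢ {w | height w = 0})) := by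
    rw [Set.disjoint_singleton_left]
    rintro ⟨⟨p, t⟩, ⟨hp, -⟩, h⟩
    exact hp.1 (List.append_eq_nil_iff.1 h).1
  conv_lhs => rw [setOf_height_eq_zero]
  rw [genSeries_union finite_setOf_weight_eq hdisj, genSeries_singleton, weight_nil,
    MvPowerSeries.monomial_zero_one]
  have hw : ∀ x ∈ {p | IsPrimitive p} ×ˢ {w | height w = 0},
      weight (x.1 ++ x.2) = weight x.1 + weight x.2 := by
    rintro ⟨p, t⟩ ⟨hp, -⟩
    exact weight_append hp.2.1 t
  rw [genSeries_image (injOn_append_of_isPrimitive _) hw,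
    genSeries_prod finite_setOf_weight_eq finite_setOf_weight_eq]

theorem arch_injective : Function.Injective arch := fun _ _ h =>
  List.append_cancel_right (List.cons_injective h)

theorem weight_arch {m : List BStep} (hm : IsBicoloredMotzkin m) :
    weight (arch m) = (Finsupp.single 0 1 + Finsupp.single 1 1) + xyWeight m := by
  obtain ⟨hpre, hm0⟩ := isBicoloredMotzkin_iff.1 hm
  have hzero (s : BStep) (hs : s ≠ U) : countAt s 0 (arch m) = 0 := by
    have hU : rise U = 1 := rfl
    rw [arch, countAt_cons, countAt_append, countAt_cons,
      countAt_eq_zero fun i h => by have := hpre i; omega]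
    simp [hs.symm, rise, hm0]
  have h1 : h1zero (arch m) = 0 := (h1zero_eq_countAt _).trans (hzero H1 (by decide))
  have h2 : h2zero (arch m) = 0 := (h2zero_eq_countAt _).trans (hzero H2 (by decide))
  rw [arch] at h1 h2
  ext i
  fin_cases i <;> simp [weight, xyWeight, h1, h2, arch] <;> ring

theorem genSeries_arch :
    genSeries weight (arch '' {m | IsBicoloredMotzkin m}) =
      MvPowerSeries.X 0 * MvPowerSeries.X 1 * F := by
  rw [genSeries_image (S := {m | IsBicoloredMotzkin m}) arch_injective.injOn
      fun _ => weight_arch, genSeries_const_add, ← F_eq_genSeries,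
    ← MvPowerSeries.X_mul_X_eq_monomial]

theorem weight_singleton_H1 : weight [H1] = Finsupp.single 2 1 + Finsupp.single 0 1 := by
  ext i
  fin_cases i <;> simp [weight, h1zero_eq_countAt, h2zero_eq_countAt, countAt_cons]

theorem weight_singleton_H2 : weight [H2] = Finsupp.single 3 1 + Finsupp.single 1 1 := by
  ext i
  fin_cases i <;> simp [weight, h1zero_eq_countAt, h2zero_eq_countAt, countAt_cons]

theorem genSeries_isPrimitive :
    genSeries weight {p | IsPrimitive p} =
      MvPowerSeries.X 2 * MvPowerSeries.X 0 + MvPowerSeries.X 3 * MvPowerSeries.X 1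
        + 2 * MvPowerSeries.X 0 * MvPowerSeries.X 1 * F := by
  set arches := arch '' {m | IsBicoloredMotzkin m}
  have h12 : Disjoint ({[H1]} : Set (List BStep)) {[H2]} := by simp
  have h23 : Disjoint ({[H1]} ∪ {[H2]}) arches := by
    rw [Set.disjoint_left]
    rintro w (rfl | rfl) ⟨m, -, h⟩ <;> simp [arch] at h
  have h34 : Disjoint ({[H1]} ∪ {[H2]} ∪ arches) (List.map reflect '' arches) := by
    rw [Set.disjoint_left]
    rintro w ((rfl | rfl) | ⟨_, -, rfl⟩) ⟨_, ⟨_, -, rfl⟩, h⟩ <;>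
      simp [arch, reflect] at h
  have hreflect : genSeries weight (List.map reflect '' arches) = genSeries weight arches := by
    refine genSeries_image (List.map_injective_iff.2 reflect_involutive.injective).injOn ?_
    rintro _ ⟨m, hm, rfl⟩
    exact weight_map_reflect (height_arch_of_height_eq_zero (isBicoloredMotzkin_iff.1 hm).2)
  rw [setOf_isPrimitive, genSeries_union finite_setOf_weight_eq h34,
    genSeries_union finite_setOf_weight_eq h23, genSeries_union finite_setOf_weight_eq h12,
    genSeries_singleton, genSeries_singleton, weight_singleton_H1, weight_singleton_H2,
    ← MvPowerSeries.X_mul_X_eq_monomial, ← MvPowerSeries.X_mul_X_eq_monomial, hreflect,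
    genSeries_arch]
  ring

end BStep

/-- `G·(1 − s1·x − s2·y − 2xy·F) = 1` in `ℤ[[x,y,s1,s2]]`. -/
theorem bicoloredGrandMotzkin_gf :
    G * (1 - MvPowerSeries.X 2 * MvPowerSeries.X 0 - MvPowerSeries.X 3 * MvPowerSeries.X 1
      - 2 * MvPowerSeries.X 0 * MvPowerSeries.X 1 * F) = 1 := by
  have h := BStep.genSeries_height_eq_zero
  rw [BStep.genSeries_isPrimitive, ← BStep.G_eq_genSeries] at h
  linear_combination h
end

section
/- For all n ≥ 0 and k ≥ 0, the number of grand Dyck paths P ∈ 𝒢_n with sv(P) = k equals the number of grand Dyck paths P ∈ 𝒢_n with ret(P) = k; that is, the statistics sv and ret are equidistributed on 𝒢_n. -/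
/-!
Fold the path at its midpoint: write `P = UV` with `|U| = |V| = n` and interleave `U` with the
reverse of `V`. After `2i` steps the folded path has height `h_i - h_{2n-i}`, so the symmetric
vertices `i ∈ {0, …, n-1}` of `P` match the returns at the even steps `2i`, `i ∈ {1, …, n}`, of the
folded path: the two ends `i = 0` and `i = n` both count, and a return at an odd step is
impossible by parity. Folding is injective on the finite set `𝒢_n`, hence a bijection of `𝒢_n`.
-/

/-- The height of the lattice path encoded by `w` (with `true = U`, `false = D`) after `j` steps. -/
def ht (w : List Bool) (j : ℕ) : ℤ :=
  ((w.take j).count true : ℤ) - ((w.take j).count false : ℤ)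

/-- A grand Dyck path of semilength `n`. -/
def IsGrandDyck (n : ℕ) (w : List Bool) : Prop :=
  w.length = 2 * n ∧ w.count true = n

/-- The number of symmetric vertices of a grand Dyck path of semilength `n`:
`sv(P) = #{i ∈ {0,…,n−1} : h_i = h_{2n−i}}`. -/
def svGD (n : ℕ) (w : List Bool) : ℕ :=
  ((Finset.range n).filter fun i => ht w i = ht w (2 * n - i)).card

/-- The number of returns of a grand Dyck path of semilength `n`:
`ret(P) = #{i ∈ {1,…,2n} : h_i = 0}`. -/
def retGD (n : ℕ) (w : List Bool) : ℕ :=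
  ((Finset.Icc 1 (2 * n)).filter fun i => ht w i = 0).card

open Finset

namespace List

variable {α : Type*}

lemma take_two_mul_interleave {l₁ l₂ : List α} (h : l₁.length = l₂.length) (i : ℕ) :
    (l₁.interleave l₂).take (2 * i) = (l₁.take i).interleave (l₂.take i) := by
  rcases le_total l₁.length i with hi | hi
  · rw [take_of_length_le hi, take_of_length_le (by omega : l₂.length ≤ i), take_of_length_le]
    simp [length_interleave]; omega
  conv_lhs => rw [← take_append_drop i l₁, ← take_append_drop i l₂,
    interleave_append_append_of_length_eq_length (by simp [h])]
  exact take_left' (by simp [length_interleave]; omega)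

lemma interleave_inj_of_length_eq : ∀ {l₁ l₂ l₃ l₄ : List α}, l₁.length = l₃.length →
    l₁.interleave l₂ = l₃.interleave l₄ → l₁ = l₃ ∧ l₂ = l₄
  | [], _, [], _, _, h => ⟨rfl, by simpa using h⟩
  | [], _, _ :: _, _, h, _ | _ :: _, _, [], _, h, _ => by simp at h
  | _ :: l₁, l₂, _ :: l₃, l₄, hl, h => by
    simp only [interleave, cons.injEq] at h
    have h₂₄ : l₂.length = l₄.length := by
      have := congrArg length h.2
      simp only [length_interleave, length_cons] at this hl
      omega
    obtain ⟨rfl, rfl⟩ := interleave_inj_of_length_eq h₂₄ h.2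
    exact ⟨by rw [h.1], rfl⟩
termination_by l₁ l₂ => l₁.length + l₂.length

end List

namespace Finset

lemma card_filter_Icc_one_eq_card_filter_range {P : ℕ → Prop} [DecidablePred P] {n : ℕ}
    (h : P 0 ↔ P n) : #{i ∈ Icc 1 n | P i} = #{i ∈ range n | P i} := by
  have hIcc : range (n + 1) = insert 0 (Icc 1 n) := by ext; simp; omega
  have hcount := congrArg (fun s => #{i ∈ s | P i}) hIcc
  simp only [range_add_one, filter_insert] at hcount
  by_cases h0 : P 0
  · rw [if_pos (h.1 h0), if_pos h0, card_insert_of_notMem (by simp),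
      card_insert_of_notMem (by simp)] at hcount
    omega
  · rw [if_neg (mt h.2 h0), if_neg h0] at hcount
    exact hcount.symm

lemma card_filter_Icc_two_mul {P : ℕ → Prop} [DecidablePred P] {n : ℕ}
    (hP : ∀ j ≤ 2 * n, P j → Even j) : #{j ∈ Icc 1 (2 * n) | P j} = #{i ∈ Icc 1 n | P (2 * i)} := by
  symm
  refine card_bij (fun i _ => 2 * i) ?_ (fun _ _ _ _ => by omega) ?_
  · intro i hi
    simp only [mem_filter, mem_Icc] at hi ⊢
    exact ⟨⟨by omega, by omega⟩, hi.2⟩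
  · intro j hj
    simp only [mem_filter, mem_Icc] at hj
    obtain ⟨m, rfl⟩ := hP j hj.1.2 hj.2
    rw [← two_mul] at hj
    exact ⟨m, by simp only [mem_filter, mem_Icc]; exact ⟨⟨by omega, by omega⟩, hj.2⟩, two_mul m⟩

end Finset

namespace GrandDyck

def height (l : List Bool) : ℤ := l.count true - l.count false

lemma ht_eq_height (w : List Bool) (j : ℕ) : ht w j = height (w.take j) := rfl

lemma height_append (l₁ l₂ : List Bool) : height (l₁ ++ l₂) = height l₁ + height l₂ := by
  simp only [height, List.count_append]; push_cast; ring

lemma height_reverse (l : List Bool) : height l.reverse = height l := by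
  simp [height]

lemma height_interleave (l₁ l₂ : List Bool) :
    height (l₁.interleave l₂) = height l₁ + height l₂ := by
  simp only [height, List.count_interleave]; push_cast; ring

lemma height_add_length (l : List Bool) : height l + l.length = 2 * l.count true := by
  rw [height, ← List.count_true_add_count_false l]; push_cast; ring

lemma height_eq_zero_of_isGrandDyck {n : ℕ} {w : List Bool} (hw : IsGrandDyck n w) :
    height w = 0 := by
  have := height_add_length w
  rw [hw.1, hw.2] at this; push_cast at this; linarith

lemma even_of_ht_eq_zero {w : List Bool} {j : ℕ} (hj : j ≤ w.length) (h : ht w j = 0) :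
    Even j := by
  have key := height_add_length (w.take j)
  rw [← ht_eq_height, h, List.length_take_of_le hj, zero_add] at key
  exact ⟨_, by exact_mod_cast key.trans (two_mul _)⟩

lemma ht_eq_neg_height_drop {w : List Bool} (hw : height w = 0) (j : ℕ) :
    ht w j = - height (w.drop j) := by
  rw [ht_eq_height, eq_neg_iff_add_eq_zero, ← height_append, List.take_append_drop, hw]

def foldPath (n : ℕ) (w : List Bool) : List Bool :=
  (w.take n).interleave (w.drop n).reverse

lemma isGrandDyck_foldPath {n : ℕ} {w : List Bool} (hw : IsGrandDyck n w) :
    IsGrandDyck n (foldPath n w) := by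
  refine ⟨?_, ?_⟩
  · simp [foldPath, List.length_interleave, hw.1]; omega
  · rw [foldPath, List.count_interleave, List.count_reverse, ← List.count_append,
      List.take_append_drop, hw.2]

lemma foldPath_injOn (n : ℕ) : Set.InjOn (foldPath n) {w | w.length = 2 * n} := by
  intro w₁ hw₁ w₂ hw₂ h
  obtain ⟨htake, hdrop⟩ := List.interleave_inj_of_length_eq (by simp [hw₁.out, hw₂.out]) h
  rw [← List.take_append_drop n w₁, htake, List.reverse_injective hdrop, List.take_append_drop]

lemma ht_foldPath_two_mul {n : ℕ} {w : List Bool} (hw : IsGrandDyck n w) {i : ℕ} (hi : i ≤ n) :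
    ht (foldPath n w) (2 * i) = ht w i - ht w (2 * n - i) := by
  have hlen : (w.take n).length = (w.drop n).reverse.length := by simp [hw.1]; omega
  have hsuffix : (w.drop n).reverse.take i = (w.drop (2 * n - i)).reverse := by
    rw [List.take_reverse, List.drop_drop]
    congr 2
    simp [hw.1]; omega
  rw [ht_eq_height, foldPath, List.take_two_mul_interleave hlen, height_interleave,
    List.take_take, min_eq_left hi, hsuffix, height_reverse,
    ht_eq_neg_height_drop (height_eq_zero_of_isGrandDyck hw) (2 * n - i), ht_eq_height,
    sub_neg_eq_add]

lemma retGD_eq_card_filter_ht_two_mul {n : ℕ} {w : List Bool} (hw : w.length = 2 * n) :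
    retGD n w = #{i ∈ Icc 1 n | ht w (2 * i) = 0} :=
  card_filter_Icc_two_mul fun _ hj => even_of_ht_eq_zero (hw ▸ hj)

lemma svGD_eq_retGD_foldPath {n : ℕ} {w : List Bool} (hw : IsGrandDyck n w) :
    svGD n w = retGD n (foldPath n w) := by
  have hfold (i : ℕ) (hi : i ≤ n) : ht (foldPath n w) (2 * i) = 0 ↔ ht w i = ht w (2 * n - i) := by
    rw [ht_foldPath_two_mul hw hi, sub_eq_zero]
  rw [retGD_eq_card_filter_ht_two_mul (isGrandDyck_foldPath hw).1,
    card_filter_Icc_one_eq_card_filter_range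
      (iff_of_true (by simp [ht]) ((hfold n le_rfl).2 (by rw [two_mul, Nat.add_sub_cancel]))), svGD]
  exact congrArg card (filter_congr fun i hi => (hfold i (mem_range.1 hi).le).symm)

lemma finite_setOf_isGrandDyck (n : ℕ) : {w | IsGrandDyck n w}.Finite :=
  (List.finite_length_eq Bool (2 * n)).subset fun _ hw => hw.1

lemma foldPath_surjOn (n : ℕ) :
    Set.SurjOn (foldPath n) {w | IsGrandDyck n w} {w | IsGrandDyck n w} :=
  (((finite_setOf_isGrandDyck n).injOn_iff_bijOn_of_mapsTo fun _ => isGrandDyck_foldPath).1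
    ((foldPath_injOn n).mono fun _ hw => hw.1)).surjOn

end GrandDyck

open GrandDyck in
/-- The statistics `sv` and `ret` are equidistributed on grand Dyck paths of semilength `n`. -/
theorem grandDyck_sv_ret_equidistributed (n k : ℕ) :
    {w : List Bool | IsGrandDyck n w ∧ svGD n w = k}.ncard
      = {w : List Bool | IsGrandDyck n w ∧ retGD n w = k}.ncard := by
  refine Set.ncard_congr (fun w _ => foldPath n w) ?_ ?_ ?_
  · rintro w ⟨hw, rfl⟩
    exact ⟨isGrandDyck_foldPath hw, (svGD_eq_retGD_foldPath hw).symm⟩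
  · exact fun _ _ hw₁ hw₂ => foldPath_injOn n hw₁.1.1 hw₂.1.1
  · rintro v ⟨hv, rfl⟩
    obtain ⟨w, hw, rfl⟩ := foldPath_surjOn n hv
    exact ⟨w, ⟨hw, svGD_eq_retGD_foldPath hw⟩, rfl⟩
end

section
/- For every n ≥ 1, the sum of ds(P) over all grand Dyck paths P ∈ 𝒢_n equals 2^{2n−1}, and the sum of sv(P) over all P ∈ 𝒢_n equals 4^n − binom(2n,n). (Equivalently, since |𝒢_n| = binom(2n,n), the expected degree of symmetry of a uniformly random path in 𝒢_n is 2^{2n−1}/binom(2n,n) and its expected number of symmetric vertices is 4^n/binom(2n,n) − 1.) -/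
/-- The degree of symmetry of a grand Dyck path of semilength `n`: the number of
`i ∈ {1,…,n}` such that `h_{i−1} = h_{2n+1−i}` and `h_i = h_{2n−i}`. -/
def dsGD (n : ℕ) (w : List Bool) : ℕ :=
  ((Finset.Icc 1 n).filter fun i =>
    ht w (i - 1) = ht w (2 * n + 1 - i) ∧ ht w i = ht w (2 * n - i)).card

open Finset

namespace GrandDyck

def words : ℕ → ℕ → Finset (List Bool)
  | 0, 0 => {[]}
  | 0, _ + 1 => ∅
  | L + 1, 0 => (words L 0).map ⟨List.cons false, List.cons_injective⟩
  | L + 1, k + 1 => (words L k).map ⟨List.cons true, List.cons_injective⟩ ∪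
      (words L (k + 1)).map ⟨List.cons false, List.cons_injective⟩

theorem mem_words {w : List Bool} {L k : ℕ} :
    w ∈ words L k ↔ w.length = L ∧ w.count true = k := by
  induction L generalizing w k with
  | zero => cases k <;> simp +contextual [words, List.length_eq_zero_iff]
  | succ L ih =>
    cases w with
    | nil => cases k <;> simp [words]
    | cons b w => cases k <;> cases b <;> simp [words, ih]

theorem card_words (L k : ℕ) : #(words L k) = L.choose k := by
  induction L generalizing k with
  | zero => cases k <;> simp [words]
  | succ L ih =>
    cases k with
    | zero => simp [words, ih]
    | succ k =>
      rw [words, card_union_of_disjoint, card_map, card_map, ih, ih, Nat.choose_succ_succ]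
      simp [disjoint_left]

theorem card_filter_rotate (P : List Bool → Prop) [DecidablePred P] (L k r : ℕ) :
    #{w ∈ words L k | P (w.rotate r)} = #{w ∈ words L k | P w} := by
  apply card_nbij (·.rotate r)
  · intro w hw
    simp only [mem_coe, mem_filter, mem_words] at hw ⊢
    exact ⟨⟨by simp [hw.1.1], by rw [(List.rotate_perm w r).count_eq, hw.1.2]⟩, hw.2⟩
  · exact fun w _ v _ h => List.rotate_eq_rotate.mp h
  · intro v hv
    simp only [mem_coe, mem_filter, mem_words] at hv
    have hv' : (v.rotate (v.length - r % v.length)).rotate r = v := List.rotate_eq_iff.mpr rfl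
    refine ⟨v.rotate (v.length - r % v.length), ?_, hv'⟩
    simp only [mem_coe, mem_filter, mem_words, List.length_rotate,
      (List.rotate_perm _ _).count_eq, hv']
    exact hv

theorem card_filter_count_take_and (P : List Bool → Prop) [DecidablePred P] (a b k l : ℕ) :
    #{u ∈ words (a + b) (k + l) | (u.take a).count true = k ∧ P (u.take a)} =
      #{x ∈ words a k | P x} * b.choose l := by
  rw [← card_words b l, ← card_product]
  apply card_nbij' (fun u => (u.take a, u.drop a)) (fun p => p.1 ++ p.2)
  · intro u hu
    simp only [mem_coe, mem_product, mem_filter, mem_words] at hu ⊢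
    have hc := congrArg (List.count true) (List.take_append_drop a u)
    rw [List.count_append] at hc
    exact ⟨⟨⟨by simp; omega, hu.2.1⟩, hu.2.2⟩, by simp; omega, by omega⟩
  · rintro ⟨x, y⟩ h
    simp only [mem_coe, mem_product, mem_filter, mem_words] at h ⊢
    obtain ⟨⟨⟨hx, hxc⟩, hP⟩, hy, hyc⟩ := h
    simp [hx, hy, hxc, hyc, hP, List.count_append]
  · intro u _
    exact List.take_append_drop a u
  · rintro ⟨x, y⟩ h
    simp only [mem_coe, mem_product, mem_filter, mem_words] at h
    simp [← h.1.1.1]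

theorem ht_add (w : List Bool) (a b : ℕ) : ht w (a + b) = ht w a + ht (w.drop a) b := by
  simp only [ht, List.take_add, List.count_append]
  push_cast
  ring

theorem ht_rotate {w : List Bool} {r j : ℕ} (h : r + j ≤ w.length) :
    ht (w.rotate r) j = ht (w.drop r) j := by
  rw [List.rotate_eq_drop_append_take (by omega), ht, ht,
    List.take_append_of_le_length (by simp; omega)]

theorem ht_eq_zero_iff {u : List Bool} {m : ℕ} (h : 2 * m ≤ u.length) :
    ht u (2 * m) = 0 ↔ (u.take (2 * m)).count true = m := by
  have := List.count_true_add_count_false (u.take (2 * m))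
  rw [List.length_take, min_eq_left h] at this
  rw [ht]
  omega

theorem ht_eq_ht_iff {n i : ℕ} {w : List Bool} (hw : w.length = 2 * n) (hi : i ≤ n) :
    ht w i = ht w (2 * n - i) ↔ ht (w.rotate i) (2 * (n - i)) = 0 := by
  rw [ht_rotate (by omega), show 2 * n - i = i + 2 * (n - i) by omega, ht_add]
  omega

theorem ht_take {l : List Bool} {j N : ℕ} (h : j ≤ N) : ht (l.take N) j = ht l j := by
  rw [ht, ht, List.take_take, min_eq_left h]

theorem card_filter_ht_eq_zero_and (P : List Bool → Prop) [DecidablePred P] (m j : ℕ) :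
    #{u ∈ words (2 * m + 2 * j) (m + j) | ht u (2 * m) = 0 ∧ P (u.take (2 * m))} =
      #{x ∈ words (2 * m) m | P x} * j.centralBinom := by
  rw [Nat.centralBinom_eq_two_mul_choose, ← card_filter_count_take_and]
  refine congrArg card (filter_congr fun u hu => ?_)
  rw [ht_eq_zero_iff (by rw [(mem_words.mp hu).1]; omega)]

theorem card_filter_ht_eq_zero (m j : ℕ) :
    #{u ∈ words (2 * m + 2 * j) (m + j) | ht u (2 * m) = 0} = m.centralBinom * j.centralBinom := by
  simpa [card_words, Nat.centralBinom_eq_two_mul_choose] using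
    card_filter_ht_eq_zero_and (fun _ => True) m j

theorem card_filter_symmetric_vertex {n i : ℕ} (hi : i ≤ n) :
    #{w ∈ words (2 * n) n | ht w i = ht w (2 * n - i)} = i.centralBinom * (n - i).centralBinom := by
  obtain ⟨m, rfl⟩ : ∃ m, n = m + i := ⟨n - i, by omega⟩
  calc #{w ∈ words (2 * (m + i)) (m + i) | ht w i = ht w (2 * (m + i) - i)}
      = #{w ∈ words (2 * (m + i)) (m + i) | ht (w.rotate i) (2 * m) = 0} := by
        refine congrArg card (filter_congr fun w hw => ?_)
        rw [ht_eq_ht_iff (mem_words.mp hw).1 (by omega), Nat.add_sub_cancel]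
    _ = #{u ∈ words (2 * m + 2 * i) (m + i) | ht u (2 * m) = 0} := by
        rw [card_filter_rotate (fun u => ht u (2 * m) = 0), mul_add]
    _ = i.centralBinom * (m + i - i).centralBinom := by
        rw [card_filter_ht_eq_zero, Nat.add_sub_cancel, mul_comm]

theorem card_filter_symmetric_step {n i : ℕ} (hi₁ : 1 ≤ i) (hi : i ≤ n) :
    #{w ∈ words (2 * n) n | ht w (i - 1) = ht w (2 * n + 1 - i) ∧ ht w i = ht w (2 * n - i)} =
      2 * ((i - 1).centralBinom * (n - i).centralBinom) := by
  obtain ⟨j, rfl⟩ : ∃ j, i = j + 1 := ⟨i - 1, by omega⟩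
  obtain ⟨m, rfl⟩ : ∃ m, n = m + 1 + j := ⟨n - (j + 1), by omega⟩
  -- Rotating by `j` brings the balanced segment of the outer vertex to the front; rotating that
  -- prefix by one more step does the same for the inner vertex.
  have hm : m + 1 + j - (j + 1) = m := by omega
  rw [Nat.add_sub_cancel, hm, show 2 * (m + 1 + j) + 1 - (j + 1) = 2 * (m + 1 + j) - j by omega]
  calc _ = #{w ∈ words (2 * (m + 1 + j)) (m + 1 + j) |
          ht (w.rotate j) (2 * (m + 1)) = 0 ∧ ht ((w.rotate j).rotate 1) (2 * m) = 0} := by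
        refine congrArg card (filter_congr fun w hw => ?_)
        have hw := (mem_words.mp hw).1
        rw [ht_eq_ht_iff hw (by omega), ht_eq_ht_iff hw (by omega), List.rotate_rotate, hm,
          show m + 1 + j - j = m + 1 by omega]
    _ = #{u ∈ words (2 * (m + 1) + 2 * j) (m + 1 + j) |
          ht u (2 * (m + 1)) = 0 ∧ ht ((u.take (2 * (m + 1))).rotate 1) (2 * m) = 0} := by
        rw [card_filter_rotate (fun u => ht u (2 * (m + 1)) = 0 ∧ ht (u.rotate 1) (2 * m) = 0),
          show 2 * (m + 1 + j) = 2 * (m + 1) + 2 * j by ring]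
        refine congrArg card (filter_congr fun u hu => ?_)
        have hu := (mem_words.mp hu).1
        rw [ht_rotate (by omega), ht_rotate (by simp; omega), List.drop_take, ht_take (by omega)]
    _ = #{x ∈ words (2 * (m + 1)) (m + 1) | ht (x.rotate 1) (2 * m) = 0} * j.centralBinom :=
        card_filter_ht_eq_zero_and (fun x => ht (x.rotate 1) (2 * m) = 0) (m + 1) j
    _ = #{x ∈ words (2 * m + 2 * 1) (m + 1) | ht x (2 * m) = 0} * j.centralBinom := by
        rw [card_filter_rotate (fun x => ht x (2 * m) = 0)]
        rfl
    _ = 2 * (j.centralBinom * m.centralBinom) := by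
        rw [card_filter_ht_eq_zero, show Nat.centralBinom 1 = 2 from rfl]
        ring

theorem two_mul_sum_antidiagonal_fst_mul {g : ℕ × ℕ → ℕ} (hg : ∀ p, g p.swap = g p) (m : ℕ) :
    2 * ∑ p ∈ antidiagonal m, p.1 * g p = m * ∑ p ∈ antidiagonal m, g p := by
  have hswap : ∑ p ∈ antidiagonal m, p.1 * g p = ∑ p ∈ antidiagonal m, p.2 * g p := by
    rw [← Nat.sum_antidiagonal_swap]
    simp only [Prod.fst_swap, hg]
  calc 2 * ∑ p ∈ antidiagonal m, p.1 * g p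
      = ∑ p ∈ antidiagonal m, p.1 * g p + ∑ p ∈ antidiagonal m, p.2 * g p := by
        rw [two_mul]
        nth_rw 2 [hswap]
    _ = ∑ p ∈ antidiagonal m, (p.1 + p.2) * g p := by
        simp only [add_mul, sum_add_distrib]
    _ = m * ∑ p ∈ antidiagonal m, g p := by
        rw [mul_sum]
        exact sum_congr rfl fun p hp => by rw [mem_antidiagonal.mp hp]

/-- The induction step multiplies by `m + 1` and combines
`(k + 1) * centralBinom (k + 1) = 2 * (2 * k + 1) * centralBinom k` with the symmetry of the sum. -/
theorem sum_antidiagonal_centralBinom_mul (m : ℕ) :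
    ∑ p ∈ antidiagonal m, p.1.centralBinom * p.2.centralBinom = 4 ^ m := by
  induction m with
  | zero => simp
  | succ m ih =>
    have hg : ∀ p : ℕ × ℕ, p.swap.1.centralBinom * p.swap.2.centralBinom =
        p.1.centralBinom * p.2.centralBinom := fun p => mul_comm _ _
    refine Nat.eq_of_mul_eq_mul_left m.succ_pos ?_
    calc (m + 1) * ∑ p ∈ antidiagonal (m + 1), p.1.centralBinom * p.2.centralBinom
        = 2 * ∑ p ∈ antidiagonal (m + 1), p.1 * (p.1.centralBinom * p.2.centralBinom) := by
          rw [two_mul_sum_antidiagonal_fst_mul hg]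
      _ = 2 * ∑ p ∈ antidiagonal m, (p.1 + 1) * ((p.1 + 1).centralBinom * p.2.centralBinom) := by
          rw [Nat.sum_antidiagonal_succ, zero_mul, zero_add]
      _ = 4 * (2 * ∑ p ∈ antidiagonal m, p.1 * (p.1.centralBinom * p.2.centralBinom) +
            ∑ p ∈ antidiagonal m, p.1.centralBinom * p.2.centralBinom) := by
          simp only [mul_sum, ← sum_add_distrib]
          refine sum_congr rfl fun p _ => ?_
          rw [← mul_assoc (p.1 + 1), Nat.succ_mul_centralBinom_succ]
          ring
      _ = (m + 1) * 4 ^ (m + 1) := by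
          rw [two_mul_sum_antidiagonal_fst_mul hg m, ih]
          ring

theorem coe_words_eq_setOf_isGrandDyck (n : ℕ) :
    (words (2 * n) n : Set (List Bool)) = {w | IsGrandDyck n w} := by
  ext w
  simp [IsGrandDyck, mem_words]

theorem sum_svGD_add_centralBinom (n : ℕ) :
    ∑ w ∈ words (2 * n) n, svGD n w + n.centralBinom = 4 ^ n := by
  calc _ = ∑ i ∈ range n, #{w ∈ words (2 * n) n | ht w i = ht w (2 * n - i)} + n.centralBinom :=
        congrArg (· + _) (sum_card_bipartiteAbove_eq_sum_card_bipartiteBelow _)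
    _ = ∑ i ∈ range (n + 1), i.centralBinom * (n - i).centralBinom := by
        rw [sum_range_succ, Nat.sub_self, Nat.centralBinom_zero, mul_one,
          sum_congr rfl fun i hi => card_filter_symmetric_vertex (mem_range.mp hi).le]
    _ = 4 ^ n := by
        rw [← Nat.sum_antidiagonal_eq_sum_range_succ_mk
          (fun p => p.1.centralBinom * p.2.centralBinom), sum_antidiagonal_centralBinom_mul]

theorem sum_dsGD (m : ℕ) : ∑ w ∈ words (2 * (m + 1)) (m + 1), dsGD (m + 1) w = 2 * 4 ^ m := by
  calc _ = ∑ i ∈ Icc 1 (m + 1), #{w ∈ words (2 * (m + 1)) (m + 1) |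
        ht w (i - 1) = ht w (2 * (m + 1) + 1 - i) ∧ ht w i = ht w (2 * (m + 1) - i)} :=
        sum_card_bipartiteAbove_eq_sum_card_bipartiteBelow _
    _ = 2 * ∑ i ∈ Icc 1 (m + 1), (i - 1).centralBinom * (m + 1 - i).centralBinom := by
        rw [mul_sum]
        exact sum_congr rfl fun i hi =>
          card_filter_symmetric_step (mem_Icc.mp hi).1 (mem_Icc.mp hi).2
    _ = 2 * 4 ^ m := by
        rw [← Ico_add_one_right_eq_Icc, sum_Ico_eq_sum_range, ← sum_antidiagonal_centralBinom_mul,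
          Nat.sum_antidiagonal_eq_sum_range_succ_mk]
        exact congrArg (2 * ·) (sum_congr rfl fun k _ => by congr 2 <;> omega)

end GrandDyck

open GrandDyck

/-- For `n ≥ 1`, the sum of `ds(P)` over all grand Dyck paths of semilength `n` equals
`2^{2n−1}`, and the sum of `sv(P)` over all grand Dyck paths of semilength `n` equals
`4^n − binom(2n,n)`. -/
theorem grandDyck_ds_sv_totals (n : ℕ) (hn : 1 ≤ n) :
    (∑ᶠ w ∈ {w : List Bool | IsGrandDyck n w}, dsGD n w) = 2 ^ (2 * n - 1) ∧
    (∑ᶠ w ∈ {w : List Bool | IsGrandDyck n w}, (svGD n w : ℤ))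
      = 4 ^ n - (2 * n).choose n := by
  obtain ⟨m, rfl⟩ : ∃ m, n = m + 1 := ⟨n - 1, by omega⟩
  rw [← coe_words_eq_setOf_isGrandDyck, finsum_mem_coe_finset, finsum_mem_coe_finset, sum_dsGD,
    ← Nat.centralBinom_eq_two_mul_choose]
  constructor
  · rw [show 2 * (m + 1) - 1 = 2 * m + 1 by omega, pow_succ, pow_mul]
    ring
  · have hsv := congrArg (Nat.cast : ℕ → ℤ) (sum_svGD_add_centralBinom (m + 1))
    push_cast at hsv
    linarith
end

section
/- For n ≥ 1 and k ≥ 0, let p(n,k) be the number of partitions λ with max(λ_1,λ'_1) = n and ds(λ) = k, and let g(n,k) be the number of grand Dyck paths P ∈ 𝒢_n with ds(P) = k. Then p(n,k) = g(n,k) − g(n−1,k−1), where g(n−1,−1) is interpreted as 0. (Equivalently, Σ_λ s^{ds(λ)} z^{max(λ_1,λ'_1)} = (1−sz)·Σ_{n,k} g(n,k) s^k z^n = (1−sz)/(2(1−s)z + √(1−4z)).) -/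
/-- A partition fitting in the `n × n` square, encoded as its zero-padded part sequence:
an antitone function `f : Fin n → ℕ` with all values at most `n`. -/
def IsBoxPartition (n : ℕ) (f : Fin n → ℕ) : Prop :=
  Antitone f ∧ ∀ i, f i ≤ n

/-- `conjAt n f i = λ'_i = #{j : λ_j ≥ i}` (for `i ≥ 1`), computed inside the box. -/
def conjAt (n : ℕ) (f : Fin n → ℕ) (i : ℕ) : ℕ :=
  (Finset.univ.filter fun j : Fin n => i ≤ f j).card

/-- The degree of symmetry of the (unpadded) partition encoded by `f`:
`ds(λ) = #{i ∈ {1,…,ℓ} : λ_i = λ'_i}`, where `ℓ` is the number of (nonzero) parts. -/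
def dsPart (n : ℕ) (f : Fin n → ℕ) : ℕ :=
  (Finset.univ.filter fun i : Fin n => 1 ≤ f i ∧ f i = conjAt n f (i.val + 1)).card

/-- `p n k`: the number of partitions `λ` with `max(λ_1, λ'_1) = n` and `ds(λ) = k`.
Such a partition fits in the `n × n` square; `λ_1 = Finset.univ.sup f` and
`λ'_1 = conjAt n f 1` is the number of parts. -/
noncomputable def p (n k : ℕ) : ℕ :=
  {f : Fin n → ℕ | IsBoxPartition n f ∧
    max (Finset.univ.sup f) (conjAt n f 1) = n ∧ dsPart n f = k}.ncard

/-- `g n k`: the number of grand Dyck paths of semilength `n` with degree of symmetry `k`. -/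
noncomputable def g (n k : ℕ) : ℕ :=
  {w : List Bool | IsGrandDyck n w ∧ dsGD n w = k}.ncard

/-!
Encode a partition `λ` in the `n × n` box by its boundary path, a grand Dyck path of semilength
`n` whose up-steps sit at positions `λ_r + (n - 1 - r)`; this is a bijection. Reading the path
backwards with `U` and `D` swapped gives the path of `λ'`, so step `i` of `P` is symmetric exactly
when the paths of `λ` and `λ'` share their `i`-th step. Shared up-steps correspond to the rows `r`
with `λ_r = λ'_r`, and a shared down-step at `i` is a shared up-step at `2n + 1 - i`, so `ds(P)`
counts the `r ≤ n` with `λ_r = λ'_r`, empty rows and columns included. If `max(λ_1, λ'_1) = n` this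
is `ds(λ)`; otherwise the last row and column of the box are empty, and deleting them gives a
partition in the `(n - 1)`-box with one match fewer.
-/

open Finset

section LatticePath

def upCount (S : Finset ℕ) (j : ℕ) : ℕ := #{t ∈ range j | t ∈ S}

def pathOf (n : ℕ) (S : Finset ℕ) : List Bool := (List.range (2 * n)).map (· ∈ S)

variable {n : ℕ} {S : Finset ℕ}

lemma upCount_eq_card_filter_lt (S : Finset ℕ) (j : ℕ) : upCount S j = #{t ∈ S | t < j} := by
  simp only [upCount]
  congr 1
  ext t
  simp [and_comm]

lemma upCount_succ (S : Finset ℕ) (t : ℕ) :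
    upCount S (t + 1) = upCount S t + if t ∈ S then 1 else 0 := by
  simp only [upCount, range_add_one, filter_insert]
  split_ifs with h
  · simp
  · rfl

lemma upCount_of_subset_range (hS : S ⊆ range (2 * n)) : upCount S (2 * n) = #S := by
  rw [upCount, filter_mem_eq_inter, inter_eq_right.mpr hS]

lemma length_pathOf : (pathOf n S).length = 2 * n := by simp [pathOf]

lemma count_take_pathOf {j : ℕ} (hj : j ≤ 2 * n) :
    ((pathOf n S).take j).count true = upCount S j := by
  rw [pathOf, ← List.map_take, List.take_range, min_eq_left hj, List.count_eq_countP,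
    List.countP_map, upCount, card_def, filter_val, ← Multiset.countP_eq_card_filter]
  simp [Finset.range, Multiset.range, Function.comp_def]

lemma ht_pathOf {j : ℕ} (hj : j ≤ 2 * n) : ht (pathOf n S) j = 2 * upCount S j - j := by
  have hlen := List.count_true_add_count_false ((pathOf n S).take j)
  rw [List.length_take, length_pathOf, min_eq_left hj] at hlen
  rw [ht, ← count_take_pathOf hj]
  omega

lemma getElem?_pathOf (t : ℕ) :
    (pathOf n S)[t]? = if t < 2 * n then some (decide (t ∈ S)) else none := by
  split_ifs with ht <;> simp [pathOf, ht]

lemma isGrandDyck_pathOf (hS : S ∈ powersetCard n (range (2 * n))) :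
    IsGrandDyck n (pathOf n S) := by
  rw [mem_powersetCard] at hS
  have hcount := count_take_pathOf (S := S) (le_refl (2 * n))
  rw [List.take_of_length_le length_pathOf.le, upCount_of_subset_range hS.1, hS.2] at hcount
  exact ⟨length_pathOf, hcount⟩

lemma pathOf_injOn : Set.InjOn (pathOf n) (powersetCard n (range (2 * n))) := by
  intro S hS T hT hST
  rw [mem_coe, mem_powersetCard] at hS hT
  ext t
  have := congrArg (·[t]?) hST
  simp only [getElem?_pathOf] at this
  by_cases ht : t < 2 * n
  · simpa [ht] using this
  · exact iff_of_false (fun h => ht (mem_range.mp (hS.1 h))) (fun h => ht (mem_range.mp (hT.1 h)))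

lemma exists_pathOf_eq {w : List Bool} (hw : IsGrandDyck n w) :
    ∃ S ∈ powersetCard n (range (2 * n)), pathOf n S = w := by
  set S : Finset ℕ := {t ∈ range (2 * n) | w[t]? = some true}
  have hpath : pathOf n S = w := by
    refine List.ext_getElem? fun t => ?_
    rw [getElem?_pathOf]
    split_ifs with ht
    · simp [S, ht, List.getElem?_eq_getElem (hw.1 ▸ ht : t < w.length)]
    · exact (List.getElem?_eq_none (by rw [hw.1]; omega)).symm
  refine ⟨S, mem_powersetCard.mpr ⟨filter_subset _ _, ?_⟩, hpath⟩
  rw [← upCount_of_subset_range (filter_subset _ _), ← count_take_pathOf le_rfl,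
    List.take_of_length_le length_pathOf.le, hpath, hw.2]

end LatticePath

section Reflection

/-- The up-steps of `pathOf n S` read backwards with `U` and `D` swapped. -/
def revCompl (n : ℕ) (S : Finset ℕ) : Finset ℕ := {t ∈ range (2 * n) | 2 * n - 1 - t ∉ S}

variable {n : ℕ} {S : Finset ℕ}

lemma mem_revCompl {t : ℕ} : t ∈ revCompl n S ↔ t < 2 * n ∧ 2 * n - 1 - t ∉ S := by
  simp [revCompl]

lemma upCount_revCompl_add_card (hS : S ⊆ range (2 * n)) {j : ℕ} (hj : j ≤ 2 * n) :
    upCount (revCompl n S) j + #S = j + upCount S (2 * n - j) := by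
  have hcompl : upCount (revCompl n S) j = #{t ∈ range j | 2 * n - 1 - t ∉ S} := by
    simp only [upCount, mem_revCompl]
    congr 1
    ext t
    simp only [mem_filter, mem_range]
    exact ⟨fun h => ⟨h.1, h.2.2⟩, fun h => ⟨h.1, by omega, h.2⟩⟩
  have hreflect : #{t ∈ range j | 2 * n - 1 - t ∈ S} = #{u ∈ S | ¬ u < 2 * n - j} := by
    have hinv : ∀ u ∈ S, 2 * n - 1 - (2 * n - 1 - u) = u := fun u hu => by
      have := mem_range.mp (hS hu); omega
    refine card_bij' (fun t _ => 2 * n - 1 - t) (fun u _ => 2 * n - 1 - u) ?_ ?_ ?_ ?_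
    · intro t ht
      simp only [mem_filter, mem_range] at ht ⊢
      exact ⟨ht.2, by omega⟩
    · intro u hu
      simp only [mem_filter] at hu
      have := mem_range.mp (hS hu.1)
      simp only [mem_filter, mem_range, hinv u hu.1]
      exact ⟨by omega, hu.1⟩
    · intro t ht
      simp only [mem_filter, mem_range] at ht
      omega
    · intro u hu
      exact hinv u (mem_filter.mp hu).1
  have hsplit_range := card_filter_add_card_filter_not (s := range j) (fun t => 2 * n - 1 - t ∈ S)
  have hsplit_S := card_filter_add_card_filter_not (s := S) (fun u => u < 2 * n - j)
  rw [card_range] at hsplit_range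
  rw [hcompl, upCount_eq_card_filter_lt]
  omega

lemma upCount_revCompl_add (hS : S ∈ powersetCard n (range (2 * n))) {j : ℕ} (hj : j ≤ 2 * n) :
    upCount (revCompl n S) j + n = j + upCount S (2 * n - j) := by
  rw [mem_powersetCard] at hS
  rw [← upCount_revCompl_add_card hS.1 hj, hS.2]

lemma revCompl_mem_powersetCard (hS : S ∈ powersetCard n (range (2 * n))) :
    revCompl n S ∈ powersetCard n (range (2 * n)) := by
  have hsub : revCompl n S ⊆ range (2 * n) := filter_subset _ _
  have h := upCount_revCompl_add hS (le_refl (2 * n))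
  rw [upCount_of_subset_range hsub, Nat.sub_self, upCount, range_zero, filter_empty,
    card_empty] at h
  exact mem_powersetCard.mpr ⟨hsub, by omega⟩

end Reflection

section SharedSteps

/-- The steps `t < m` on which the paths with up-step sets `S` and `T` coincide. -/
def sharedSteps (S T : Finset ℕ) (m : ℕ) : Finset ℕ :=
  {t ∈ range m | upCount S t = upCount T t ∧ (t ∈ S ↔ t ∈ T)}

def commonUpSteps (S T : Finset ℕ) : Finset ℕ := {t ∈ S ∩ T | upCount S t = upCount T t}

lemma upCount_eq_and_succ_iff (S T : Finset ℕ) (t : ℕ) :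
    (upCount S t = upCount T t ∧ upCount S (t + 1) = upCount T (t + 1)) ↔
      (upCount S t = upCount T t ∧ (t ∈ S ↔ t ∈ T)) := by
  rw [upCount_succ, upCount_succ]
  split_ifs <;> simp_all

variable {n : ℕ} {S : Finset ℕ} (hS : S ∈ powersetCard n (range (2 * n)))
include hS

lemma ht_pathOf_eq_ht_sub_iff {j : ℕ} (hj : j ≤ 2 * n) :
    ht (pathOf n S) j = ht (pathOf n S) (2 * n - j) ↔ upCount S j = upCount (revCompl n S) j := by
  have h := upCount_revCompl_add hS hj
  rw [ht_pathOf hj, ht_pathOf (Nat.sub_le _ _)]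
  omega

lemma dsGD_pathOf_eq_card_sharedSteps :
    dsGD n (pathOf n S) = #(sharedSteps S (revCompl n S) n) := by
  refine card_bij' (fun i _ => i - 1) (fun t _ => t + 1) ?_ ?_ ?_ ?_
  · intro i hi
    simp only [sharedSteps, mem_filter, mem_Icc, mem_range] at hi ⊢
    obtain ⟨⟨hi1, hin⟩, hsym⟩ := hi
    rw [show 2 * n + 1 - i = 2 * n - (i - 1) by omega, ht_pathOf_eq_ht_sub_iff hS (by omega),
      ht_pathOf_eq_ht_sub_iff hS (by omega), ← Nat.sub_add_cancel hi1] at hsym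
    exact ⟨by omega, (upCount_eq_and_succ_iff _ _ _).mp hsym⟩
  · intro t ht
    simp only [sharedSteps, mem_filter, mem_Icc, mem_range] at ht ⊢
    refine ⟨⟨by omega, by omega⟩, ?_⟩
    rw [show 2 * n + 1 - (t + 1) = 2 * n - t by omega, Nat.add_sub_cancel,
      ht_pathOf_eq_ht_sub_iff hS (by omega), ht_pathOf_eq_ht_sub_iff hS (by omega)]
    exact (upCount_eq_and_succ_iff _ _ _).mpr ht.2
  · intro i hi
    simp only [mem_filter, mem_Icc] at hi
    omega
  · intro t _
    omega

lemma sharedDownStep_iff_sharedUpStep {t : ℕ} (ht : t < 2 * n) :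
    (upCount S t = upCount (revCompl n S) t ∧ t ∉ S ∧ t ∉ revCompl n S) ↔
      (upCount S (2 * n - 1 - t) = upCount (revCompl n S) (2 * n - 1 - t) ∧
        2 * n - 1 - t ∈ S ∧ 2 * n - 1 - t ∈ revCompl n S) := by
  have hT := upCount_revCompl_add hS (j := t) ht.le
  have hT' := upCount_revCompl_add hS (j := 2 * n - 1 - t + 1) (by omega)
  rw [show 2 * n - t = 2 * n - 1 - t + 1 by omega, upCount_succ] at hT
  rw [show 2 * n - (2 * n - 1 - t + 1) = t by omega, upCount_succ] at hT'
  have hmem : t ∈ revCompl n S ↔ 2 * n - 1 - t ∉ S := by simp [mem_revCompl, ht]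
  have hmem' : 2 * n - 1 - t ∈ revCompl n S ↔ t ∉ S := by
    rw [mem_revCompl, show 2 * n - 1 - (2 * n - 1 - t) = t by omega]
    exact and_iff_right (by omega)
  rw [hmem, hmem']
  split_ifs at hT hT' <;> grind

lemma card_sharedDownSteps :
    #{t ∈ sharedSteps S (revCompl n S) n | t ∉ S} =
      #{t ∈ commonUpSteps S (revCompl n S) | ¬ t < n} := by
  have hS2n : ∀ t ∈ S, t < 2 * n := fun t ht => mem_range.mp ((mem_powersetCard.mp hS).1 ht)
  refine card_bij' (fun t _ => 2 * n - 1 - t) (fun t _ => 2 * n - 1 - t) ?_ ?_ ?_ ?_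
  · intro t ht
    simp only [sharedSteps, commonUpSteps, mem_filter, mem_range, mem_inter] at ht ⊢
    have := (sharedDownStep_iff_sharedUpStep hS (t := t) (by omega)).mp (by tauto)
    exact ⟨⟨⟨this.2.1, this.2.2⟩, this.1⟩, by omega⟩
  · intro t ht
    simp only [sharedSteps, commonUpSteps, mem_filter, mem_range, mem_inter] at ht ⊢
    have ht2n := hS2n t ht.1.1.1
    have := (sharedDownStep_iff_sharedUpStep hS (t := 2 * n - 1 - t) (by omega)).mpr
    rw [show 2 * n - 1 - (2 * n - 1 - t) = t by omega] at this
    have := this ⟨ht.1.2, ht.1.1⟩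
    exact ⟨⟨by omega, this.1, by tauto⟩, this.2.1⟩
  · intro t ht
    simp only [sharedSteps, mem_filter, mem_range] at ht
    omega
  · intro t ht
    simp only [commonUpSteps, mem_filter, mem_inter] at ht
    have := hS2n t ht.1.1.1
    omega

lemma dsGD_pathOf : dsGD n (pathOf n S) = #(commonUpSteps S (revCompl n S)) := by
  rw [dsGD_pathOf_eq_card_sharedSteps hS,
    ← card_filter_add_card_filter_not (s := sharedSteps S (revCompl n S) n) (· ∈ S),
    card_sharedDownSteps hS,
    ← card_filter_add_card_filter_not (s := commonUpSteps S (revCompl n S)) (· < n)]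
  congr 2
  ext t
  simp only [sharedSteps, commonUpSteps, mem_filter, mem_range, mem_inter]
  tauto

end SharedSteps

section BoxPartition

/-- The boundary path of `f` runs from the bottom-left to the top-right corner of the box; the
up-step of row `r` is preceded by `f r` down-steps and by the up-steps of the `n - 1 - r` rows
below it. -/
def upStep (n : ℕ) (f : Fin n → ℕ) (r : Fin n) : ℕ := f r + (n - 1 - r)

def upSet (n : ℕ) (f : Fin n → ℕ) : Finset ℕ := univ.image (upStep n f)

/-- The conjugate partition, with columns `0`-indexed like the rows. -/
def conj (n : ℕ) (f : Fin n → ℕ) (c : Fin n) : ℕ := conjAt n f (c + 1)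

def symCount (n : ℕ) (f : Fin n → ℕ) : ℕ := #{r | f r = conj n f r}

variable {n : ℕ} {f : Fin n → ℕ}

lemma mem_upSet {t : ℕ} : t ∈ upSet n f ↔ ∃ r, upStep n f r = t := by
  simp [upSet]

lemma upStep_strictAnti (hf : Antitone f) : StrictAnti (upStep n f) := by
  intro r r' h
  have := hf h.le
  have : (r : ℕ) < r' := h
  have := r'.isLt
  simp only [upStep]
  omega

lemma upStep_lt (hf : ∀ r, f r ≤ n) (r : Fin n) : upStep n f r < 2 * n := by
  have := hf r
  have := r.isLt
  simp only [upStep]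
  omega

lemma upSet_mem_powersetCard (hf : IsBoxPartition n f) :
    upSet n f ∈ powersetCard n (range (2 * n)) := by
  refine mem_powersetCard.mpr ⟨fun t ht => ?_, ?_⟩
  · obtain ⟨r, -, rfl⟩ := mem_image.mp ht
    exact mem_range.mpr (upStep_lt hf.2 r)
  · rw [upSet, card_image_of_injective _ (upStep_strictAnti hf.1).injective, card_univ,
      Fintype.card_fin]

lemma upCount_upSet_upStep (hf : Antitone f) (r : Fin n) :
    upCount (upSet n f) (upStep n f r) = n - 1 - r := by
  rw [upCount_eq_card_filter_lt, upSet, filter_image,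
    card_image_of_injective _ (upStep_strictAnti hf).injective, ← Fin.card_Ioi]
  congr 1
  ext r'
  simp [(upStep_strictAnti hf).lt_iff_gt]

lemma le_iff_succ_le_conjAt (hf : Antitone f) (r : Fin n) (j : ℕ) :
    j ≤ f r ↔ (r : ℕ) + 1 ≤ conjAt n f j := by
  constructor
  · intro hj
    rw [← Fin.card_Iic, conjAt]
    exact card_le_card fun r' hr' => mem_filter.mpr ⟨mem_univ _, hj.trans (hf (mem_Iic.mp hr'))⟩
  · intro hr
    by_contra! hj
    have hsub : ({r' | j ≤ f r'} : Finset (Fin n)) ⊆ Iio r := by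
      intro r' hr'
      rw [mem_filter] at hr'
      exact mem_Iio.mpr (lt_of_not_ge fun h => absurd (hf h) (by omega))
    have := card_le_card hsub
    rw [Fin.card_Iio] at this
    rw [conjAt] at hr
    omega

lemma antitone_conjAt (f : Fin n → ℕ) : Antitone (conjAt n f) := fun i j hij =>
  card_le_card fun r hr => by
    simp only [mem_filter, mem_univ, true_and] at hr ⊢
    omega

lemma conjAt_le (f : Fin n → ℕ) (j : ℕ) : conjAt n f j ≤ n :=
  (card_le_univ _).trans (Fintype.card_fin n).le

lemma isBoxPartition_conj (f : Fin n → ℕ) : IsBoxPartition n (conj n f) :=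
  ⟨fun c c' h => antitone_conjAt f (by simpa using h), fun c => conjAt_le f (c + 1)⟩

lemma upSet_conj (hf : IsBoxPartition n f) : upSet n (conj n f) = revCompl n (upSet n f) := by
  refine eq_of_subset_of_card_le (fun t ht => ?_) ?_
  · obtain ⟨c, rfl⟩ := mem_upSet.mp ht
    refine mem_revCompl.mpr ⟨upStep_lt (isBoxPartition_conj f).2 c, fun hmem => ?_⟩
    obtain ⟨r, hr⟩ := mem_upSet.mp hmem
    -- `hr` says `f r + conj n f c = r + c + 1`, which the Galois connection rules out.
    have hgalois := le_iff_succ_le_conjAt hf.1 r (c + 1)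
    have := upStep_lt (isBoxPartition_conj f).2 c
    simp only [upStep, conj] at hr this
    omega
  · rw [(mem_powersetCard.mp (revCompl_mem_powersetCard (upSet_mem_powersetCard hf))).2,
      (mem_powersetCard.mp (upSet_mem_powersetCard (isBoxPartition_conj f))).2]

lemma commonUpSteps_upSet_conj (hf : Antitone f) :
    commonUpSteps (upSet n f) (upSet n (conj n f)) = image (upStep n f) {r | f r = conj n f r} := by
  have hf' := isBoxPartition_conj f
  ext t
  rw [commonUpSteps, mem_filter, mem_inter, mem_upSet, mem_upSet, mem_image]
  simp only [mem_filter, mem_univ, true_and]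
  constructor
  · rintro ⟨⟨⟨r, rfl⟩, ⟨c, hc⟩⟩, hcount⟩
    rw [← hc, upCount_upSet_upStep hf'.1, hc, upCount_upSet_upStep hf] at hcount
    obtain rfl : r = c := Fin.ext (by have := r.isLt; have := c.isLt; omega)
    exact ⟨r, by simpa [upStep] using hc.symm, rfl⟩
  · rintro ⟨r, hr, rfl⟩
    have hstep : upStep n (conj n f) r = upStep n f r := by simp [upStep, hr]
    refine ⟨⟨⟨r, rfl⟩, ⟨r, hstep⟩⟩, ?_⟩
    rw [upCount_upSet_upStep hf, ← hstep, upCount_upSet_upStep hf'.1]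

lemma dsGD_pathOf_upSet (hf : IsBoxPartition n f) :
    dsGD n (pathOf n (upSet n f)) = symCount n f := by
  rw [dsGD_pathOf (upSet_mem_powersetCard hf), ← upSet_conj hf, commonUpSteps_upSet_conj hf.1,
    card_image_of_injective _ (upStep_strictAnti hf.1).injective, symCount]

end BoxPartition

lemma StrictMono.add_sub_le_fin {m : ℕ} {e : Fin m → ℕ} (he : StrictMono e) {a b : Fin m}
    (hab : a ≤ b) : e a + (b - a) ≤ e b := by
  have hsub : (Icc a b).image e ⊆ Icc (e a) (e b) := fun x hx => by
    obtain ⟨y, hy, rfl⟩ := mem_image.mp hx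
    rw [mem_Icc] at hy ⊢
    exact ⟨he.monotone hy.1, he.monotone hy.2⟩
  have := card_le_card hsub
  rw [card_image_of_injective _ he.injective, Fin.card_Icc, Nat.card_Icc] at this
  have : (a : ℕ) ≤ b := hab
  omega

section Bijection

variable {n : ℕ}

lemma upSet_injOn : Set.InjOn (upSet n) {f | Antitone f} := by
  intro f hf f' hf' h
  have hrange : Set.range (upStep n f) = Set.range (upStep n f') := by
    simpa [upSet] using congrArg (fun s : Finset ℕ => (s : Set ℕ)) h
  have hstep := (StrictAnti.range_inj (upStep_strictAnti hf) (upStep_strictAnti hf')).mp hrange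
  funext r
  have := congrFun hstep r
  simp only [upStep] at this
  omega

lemma exists_upSet_eq {S : Finset ℕ} (hS : S ∈ powersetCard n (range (2 * n))) :
    ∃ f, IsBoxPartition n f ∧ upSet n f = S := by
  obtain ⟨hsub, hcard⟩ := mem_powersetCard.mp hS
  set e := S.orderEmbOfFin hcard
  have hlt : ∀ k, e k < 2 * n := fun k => mem_range.mp (hsub (S.orderEmbOfFin_mem hcard k))
  have hgap : ∀ k k' : Fin n, k ≤ k' → e k + (k' - k) ≤ e k' :=
    fun k k' h => e.strictMono.add_sub_le_fin h
  refine ⟨fun r => e r.rev - r.rev, ⟨fun r r' h => ?_, fun r => ?_⟩, ?_⟩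
  · have := hgap r'.rev r.rev (Fin.rev_le_rev.mpr h)
    simp only [Fin.val_rev] at this ⊢
    omega
  · have := r.isLt
    have hlast := hgap r.rev ⟨n - 1, by omega⟩
      (Fin.le_iff_val_le_val.mpr (by simp only [Fin.val_rev]; omega))
    have := hlt ⟨n - 1, by omega⟩
    simp only [Fin.val_rev] at hlast ⊢
    omega
  · have hstep : upStep n (fun r => e r.rev - r.rev) = e ∘ Fin.rev := by
      funext r
      have := r.isLt
      have := hgap ⟨0, by omega⟩ r.rev (Fin.mk_le_mk.mpr (Nat.zero_le _))
      simp only [upStep, Function.comp_apply, Fin.val_rev] at this ⊢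
      omega
    rw [upSet, hstep, ← image_image, image_univ_of_surjective Fin.rev_surjective,
      image_orderEmbOfFin_univ]

lemma g_eq_ncard (n k : ℕ) :
    g n k = {f : Fin n → ℕ | IsBoxPartition n f ∧ symCount n f = k}.ncard := by
  have himage : {w | IsGrandDyck n w ∧ dsGD n w = k} =
      (fun f => pathOf n (upSet n f)) '' {f | IsBoxPartition n f ∧ symCount n f = k} := by
    ext w
    constructor
    · rintro ⟨hw, rfl⟩
      obtain ⟨S, hS, rfl⟩ := exists_pathOf_eq hw
      obtain ⟨f, hf, rfl⟩ := exists_upSet_eq hS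
      exact ⟨f, ⟨hf, (dsGD_pathOf_upSet hf).symm⟩, rfl⟩
    · rintro ⟨f, ⟨hf, rfl⟩, rfl⟩
      exact ⟨isGrandDyck_pathOf (upSet_mem_powersetCard hf), dsGD_pathOf_upSet hf⟩
  rw [g, himage, Set.InjOn.ncard_image]
  intro f hf f' hf' h
  exact upSet_injOn hf.1.1 hf'.1.1
    (pathOf_injOn (upSet_mem_powersetCard hf.1) (upSet_mem_powersetCard hf'.1) h)

end Bijection

def squareSide (n : ℕ) (f : Fin n → ℕ) : ℕ := max (univ.sup f) (conjAt n f 1)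

lemma squareSide_le {n : ℕ} {f : Fin n → ℕ} (hf : ∀ r, f r ≤ n) : squareSide n f ≤ n :=
  max_le (Finset.sup_le fun r _ => hf r) (conjAt_le f 1)

lemma symCount_eq_dsPart {n : ℕ} {f : Fin n → ℕ} (hf : Antitone f) (hside : squareSide n f = n) :
    symCount n f = dsPart n f := by
  rw [symCount, dsPart]
  congr 1
  refine filter_congr fun r _ => ⟨fun hr => ⟨?_, hr⟩, And.right⟩
  -- An empty row `r` with empty column `r` would give `λ'_1 ≤ r` and `λ_1 ≤ r`, so `r ≥ n`.
  by_contra! hzero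
  have hparts : conjAt n f 1 ≤ r := by
    have := (le_iff_succ_le_conjAt hf r 1).not.mp (by omega)
    omega
  obtain ⟨r', -, hr'⟩ := exists_mem_eq_sup univ ⟨r, mem_univ r⟩ f
  have hwidth : univ.sup f = n := by
    have := r.isLt
    rw [squareSide] at hside
    omega
  have := (le_iff_succ_le_conjAt hf r' (r + 1)).mp (by have := r.isLt; omega)
  rw [conj] at hr
  omega

section ZeroExtension

variable {m : ℕ}

lemma conjAt_snoc_zero (f : Fin m → ℕ) {j : ℕ} (hj : 1 ≤ j) :
    conjAt (m + 1) (Fin.snoc f 0) j = conjAt m f j := by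
  simp only [conjAt, card_filter, Fin.sum_univ_castSucc, Fin.snoc_castSucc, Fin.snoc_last]
  simp [show ¬ j ≤ 0 by omega]

lemma conj_snoc_zero {f : Fin m → ℕ} (hf : ∀ r, f r ≤ m) :
    conj (m + 1) (Fin.snoc f 0) = Fin.snoc (conj m f) 0 := by
  funext c
  induction c using Fin.lastCases with
  | last =>
    rw [Fin.snoc_last, conj, conjAt_snoc_zero f (by omega), conjAt, card_eq_zero,
      filter_eq_empty_iff]
    intro r _
    have := hf r
    simp only [Fin.val_last]
    omega
  | cast c => rw [Fin.snoc_castSucc, conj, conjAt_snoc_zero f (by omega), Fin.val_castSucc, conj]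

lemma symCount_snoc_zero {f : Fin m → ℕ} (hf : ∀ r, f r ≤ m) :
    symCount (m + 1) (Fin.snoc f 0) = symCount m f + 1 := by
  rw [symCount, conj_snoc_zero hf, card_filter, Fin.sum_univ_castSucc, symCount, card_filter]
  simp only [Fin.snoc_castSucc, Fin.snoc_last, if_true]

lemma isBoxPartition_snoc_zero {f : Fin m → ℕ} (hf : IsBoxPartition m f) :
    IsBoxPartition (m + 1) (Fin.snoc f 0) := by
  refine ⟨fun r r' h => ?_, fun r => ?_⟩
  · induction r' using Fin.lastCases with
    | last => simp
    | cast c' =>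
      induction r using Fin.lastCases with
      | last => exact absurd h (not_le.mpr (Fin.castSucc_lt_last c'))
      | cast c => simpa using hf.1 (Fin.castSucc_le_castSucc_iff.mp h)
  · induction r using Fin.lastCases with
    | last => simp
    | cast r => simpa using (hf.2 r).trans m.le_succ

lemma squareSide_lt_iff {f : Fin (m + 1) → ℕ} (hf : Antitone f) :
    squareSide (m + 1) f < m + 1 ↔ ∃ f', IsBoxPartition m f' ∧ Fin.snoc f' 0 = f := by
  constructor
  · intro hside
    have hlast : f (Fin.last m) = 0 := by
      by_contra hpos
      have := (le_iff_succ_le_conjAt hf (Fin.last m) 1).mp (by omega)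
      simp only [Fin.val_last, squareSide] at this hside
      omega
    refine ⟨Fin.init f, ⟨fun a b h => hf (Fin.castSucc_le_castSucc_iff.mpr h), fun r => ?_⟩, ?_⟩
    · have := le_sup (f := f) (mem_univ (Fin.castSucc r))
      rw [squareSide] at hside
      rw [Fin.init]
      omega
    · rw [← hlast, Fin.snoc_init_self]
  · rintro ⟨f', hf', rfl⟩
    refine max_lt (Nat.lt_succ_of_le (Finset.sup_le fun r _ => ?_)) ?_
    · induction r using Fin.lastCases with
      | last => simp
      | cast r => simpa using hf'.2 r
    · rw [conjAt_snoc_zero f' le_rfl]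
      exact Nat.lt_succ_of_le (conjAt_le f' 1)

end ZeroExtension

lemma finite_isBoxPartition (n : ℕ) : {f : Fin n → ℕ | IsBoxPartition n f}.Finite :=
  (Set.Finite.pi fun _ : Fin n => Set.finite_Iic n).subset fun _ hf =>
    Set.mem_univ_pi.mpr fun r => Set.mem_Iic.mpr (hf.2 r)

lemma ncard_squareSide_lt (m k : ℕ) :
    {f : Fin (m + 1) → ℕ | IsBoxPartition (m + 1) f ∧ squareSide (m + 1) f < m + 1 ∧
      symCount (m + 1) f = k}.ncard = if k = 0 then 0 else g m (k - 1) := by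
  have himage : {f : Fin (m + 1) → ℕ | IsBoxPartition (m + 1) f ∧ squareSide (m + 1) f < m + 1 ∧
      symCount (m + 1) f = k} =
      (fun f' => Fin.snoc f' 0) '' {f' | IsBoxPartition m f' ∧ symCount m f' + 1 = k} := by
    ext f
    constructor
    · rintro ⟨hf, hside, rfl⟩
      obtain ⟨f', hf', rfl⟩ := (squareSide_lt_iff hf.1).mp hside
      exact ⟨f', ⟨hf', (symCount_snoc_zero hf'.2).symm⟩, rfl⟩
    · rintro ⟨f', ⟨hf', rfl⟩, rfl⟩
      have hbox := isBoxPartition_snoc_zero hf'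
      exact ⟨hbox, (squareSide_lt_iff hbox.1).mpr ⟨f', hf', rfl⟩, symCount_snoc_zero hf'.2⟩
  rw [himage, Set.InjOn.ncard_image fun a _ b _ h => by simpa using congrArg Fin.init h]
  split_ifs with hk
  · simp [hk]
  · rw [g_eq_ncard]
    congr
    exact Set.ext fun f' => and_congr_right fun _ => by omega

lemma g_succ_eq (m k : ℕ) : g (m + 1) k = p (m + 1) k + if k = 0 then 0 else g m (k - 1) := by
  have hsplit : {f : Fin (m + 1) → ℕ | IsBoxPartition (m + 1) f ∧ symCount (m + 1) f = k} =
      {f | IsBoxPartition (m + 1) f ∧ squareSide (m + 1) f = m + 1 ∧ dsPart (m + 1) f = k} ∪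
      {f | IsBoxPartition (m + 1) f ∧ squareSide (m + 1) f < m + 1 ∧ symCount (m + 1) f = k} := by
    ext f
    constructor
    · rintro ⟨hf, rfl⟩
      rcases (squareSide_le hf.2).lt_or_eq with hside | hside
      · exact Or.inr ⟨hf, hside, rfl⟩
      · exact Or.inl ⟨hf, hside, (symCount_eq_dsPart hf.1 hside).symm⟩
    · rintro (⟨hf, hside, rfl⟩ | ⟨hf, -, rfl⟩)
      · exact ⟨hf, symCount_eq_dsPart hf.1 hside⟩
      · exact ⟨hf, rfl⟩
  rw [g_eq_ncard, hsplit, ← ncard_squareSide_lt,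
    Set.ncard_union_eq (Set.disjoint_left.mpr fun f hf hf' => hf'.2.1.ne hf.2.1)
      ((finite_isBoxPartition _).subset fun f hf => hf.1)
      ((finite_isBoxPartition _).subset fun f hf => hf.1)]
  rfl

/-- For `n ≥ 1`: `p(n,k) = g(n,k) − g(n−1,k−1)`, with `g(n−1,−1)` interpreted as `0`. -/
theorem partition_maxSquare_ds (n k : ℕ) (hn : 1 ≤ n) :
    (p n k : ℤ) = g n k - if k = 0 then 0 else g (n - 1) (k - 1) := by
  obtain ⟨m, rfl⟩ : ∃ m, n = m + 1 := ⟨n - 1, by omega⟩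
  rw [g_succ_eq, Nat.add_sub_cancel]
  split_ifs <;> push_cast <;> ring
end

section
/- For all n ≥ 0 and k ≥ 0, the number of partitions λ ∈ P^□_n with dsh(λ) = k equals the number of grand Dyck paths P ∈ 𝒢_n with pho(P) = k. -/
/-- The number of peaks at height 1 of a grand Dyck path of semilength `n`:
`pho(P) = #{i ∈ {1,…,2n−1} : p_i = U, p_{i+1} = D, h_i = 1}` (here `p_i = w.getD (i-1) _`). -/
def phoGD (n : ℕ) (w : List Bool) : ℕ :=
  ((Finset.Ico 1 (2 * n)).filter fun i =>
    w.getD (i - 1) false = true ∧ w.getD i true = false ∧ ht w i = 1).card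

/-- The number of self-conjugate diagonal hooks of the partition encoded by `f`:
`dsh(λ) = #{i ∈ {1,…,δ(λ)} : λ_i = λ'_i}`, where `i ≤ δ(λ)` iff `λ_i ≥ i`. -/
def dshPart (n : ℕ) (f : Fin n → ℕ) : ℕ :=
  (Finset.univ.filter fun i : Fin n =>
    i.val + 1 ≤ f i ∧ f i = conjAt n f (i.val + 1)).card

/-!
Encode a partition in the `n × n` box by its Maya set `A ⊆ {0, …, 2n-1}`, `#A = n`: the positions
of the vertical steps of its boundary. Reading the boundary alternately from both ends,
`2n-1, 0, 2n-2, 1, …`, folds it into a grand Dyck path, and this is a bijection. The diagonal hook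
at `(i, i)` has its arm ending at a vertical step `2n-1-t` with `i` vertical steps after it, and it
is self-conjugate iff the mirror position `t` ends its leg: `t` is a horizontal step with `i`
horizontal steps before it. In the folded path this says that steps `2t` and `2t+1` are `U D` and
start at height `0`, i.e. form a peak at height `1`; heights after an even number of steps are
even, so every peak at height `1` arises this way.
-/

open Finset

theorem Set.BijOn.sep_of_iff {α β : Type*} {φ : α → β} {s : Set α} {t : Set β}
    (h : Set.BijOn φ s t) {p : α → Prop} {q : β → Prop} (hpq : ∀ x ∈ s, q (φ x) ↔ p x) :
    Set.BijOn φ {x | x ∈ s ∧ p x} {y | y ∈ t ∧ q y} := by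
  refine ⟨fun x ⟨hx, hpx⟩ => ⟨h.mapsTo hx, (hpq x hx).2 hpx⟩, h.injOn.mono fun x hx => hx.1, ?_⟩
  rintro y ⟨hy, hqy⟩
  obtain ⟨x, hx, rfl⟩ := h.surjOn hy
  exact ⟨x, ⟨hx, (hpq x hx).1 hqy⟩, rfl⟩

theorem Finset.card_filter_le_eq_add_ite (A : Finset ℕ) (a : ℕ) :
    #{x ∈ A | a ≤ x} = #{x ∈ A | a + 1 ≤ x} + if a ∈ A then 1 else 0 := by
  have hsplit : {x ∈ A | a ≤ x} = {x ∈ A | a + 1 ≤ x} ∪ {x ∈ A | x = a} := by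
    ext x; simp only [mem_filter, mem_union]; grind
  rw [hsplit, card_union_of_disjoint (disjoint_filter.2 fun x _ h1 h2 => by omega), filter_eq']
  split_ifs <;> simp

theorem Finset.card_filter_lt_add_one_eq_add_ite (A : Finset ℕ) (a : ℕ) :
    #{x ∈ A | x < a + 1} = #{x ∈ A | x < a} + if a ∈ A then 1 else 0 := by
  have hsplit : {x ∈ A | x < a + 1} = {x ∈ A | x < a} ∪ {x ∈ A | x = a} := by
    ext x; simp only [mem_filter, mem_union]; grind
  rw [hsplit, card_union_of_disjoint (disjoint_filter.2 fun x _ h1 h2 => by omega), filter_eq']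
  split_ifs <;> simp

theorem ht_add_one (w : List Bool) {j : ℕ} (hj : j < w.length) :
    ht w (j + 1) = ht w j + if w[j] then 1 else -1 := by
  unfold ht
  rw [List.take_add_one, List.getElem?_eq_getElem hj]
  cases w[j] <;> simp <;> ring

theorem Fin.add_sub_le_of_strictMono {n : ℕ} {g : Fin n → ℕ} (hg : StrictMono g) {a b : Fin n}
    (hab : a ≤ b) : g a + (b - a) ≤ g b := by
  have hsub : (Icc a b).image g ⊆ Icc (g a) (g b) := fun x hx => by
    obtain ⟨c, hc, rfl⟩ := mem_image.1 hx
    rw [mem_Icc] at hc ⊢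
    exact ⟨hg.monotone hc.1, hg.monotone hc.2⟩
  have hcard := card_le_card hsub
  rw [card_image_of_injective _ hg.injective, Fin.card_Icc, Nat.card_Icc] at hcard
  omega

theorem Fin.val_le_of_strictMono {n : ℕ} {g : Fin n → ℕ} (hg : StrictMono g) (j : Fin n) :
    j.val ≤ g j := by
  have := Fin.add_sub_le_of_strictMono hg (a := ⟨0, j.pos⟩) (Fin.le_def.2 (Nat.zero_le j.val))
  dsimp only at this
  omega

theorem Fin.card_filter_eq_iff_of_antitone {n : ℕ} {p : Fin n → Prop} [DecidablePred p]
    (hp : ∀ ⦃i j⦄, i ≤ j → p j → p i) {m : ℕ} (hm : m ≤ n) :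
    #{j | p j} = m ↔ ∀ j, p j ↔ j.val < m := by
  constructor
  · rintro rfl j
    constructor
    · intro hj
      have hcard := card_le_card (s := Iic j) (t := {j | p j})
        fun i hi => mem_filter.2 ⟨mem_univ _, hp (mem_Iic.1 hi) hj⟩
      rw [Fin.card_Iic] at hcard
      omega
    · intro hj
      by_contra hnj
      have hcard := card_le_card (s := {j | p j}) (t := Iio j)
        fun i hi => mem_Iio.2 (lt_of_not_ge fun hji => hnj (hp hji (mem_filter.1 hi).2))
      rw [Fin.card_Iio] at hcard
      omega
  · intro h
    rw [filter_congr fun j _ => h j, Fin.card_filter_val_lt, min_eq_right hm]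

section Path

variable {n : ℕ} {A : Finset ℕ}

/-- Reads the boundary sequence with vertical steps at `A` from both ends inwards: step `2t` is
`U` iff `2n-1-t ∈ A`, step `2t+1` is `U` iff `t ∈ A`. -/
def pathOfMaya (n : ℕ) (A : Finset ℕ) : List Bool :=
  List.ofFn fun m : Fin (2 * n) =>
    if m.val % 2 = 0 then decide (2 * n - 1 - m.val / 2 ∈ A) else decide (m.val / 2 ∈ A)

def mayaOfPath (n : ℕ) (w : List Bool) : Finset ℕ :=
  (range (2 * n)).filter fun x =>
    if x < n then w.getD (2 * x + 1) false = true else w.getD (2 * (2 * n - 1 - x)) false = true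

@[simp]
theorem length_pathOfMaya : (pathOfMaya n A).length = 2 * n :=
  List.length_ofFn

theorem getElem_pathOfMaya_two_mul {t : ℕ} (h : 2 * t < (pathOfMaya n A).length) :
    (pathOfMaya n A)[2 * t] = decide (2 * n - 1 - t ∈ A) := by
  simp [pathOfMaya]

theorem getElem_pathOfMaya_two_mul_add_one {t : ℕ} (h : 2 * t + 1 < (pathOfMaya n A).length) :
    (pathOfMaya n A)[2 * t + 1] = decide (t ∈ A) := by
  simp [pathOfMaya, Nat.add_mod, show (2 * t + 1) / 2 = t by omega]

theorem ht_pathOfMaya_two_mul (hA : A ⊆ range (2 * n)) {t : ℕ} (htn : t ≤ n) :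
    ht (pathOfMaya n A) (2 * t) =
      2 * ((#{x ∈ A | 2 * n - t ≤ x} + #{x ∈ A | x < t} : ℕ) : ℤ) - 2 * t := by
  induction t with
  | zero =>
    have hnone : #{x ∈ A | 2 * n ≤ x} = 0 :=
      card_eq_zero.2 (filter_false_of_mem fun x hx => by simpa using hA hx)
    simp [ht, hnone]
  | succ t ih =>
    rw [show 2 * (t + 1) = 2 * t + 1 + 1 by ring, ht_add_one _ (by simp; omega),
      ht_add_one _ (by simp; omega), getElem_pathOfMaya_two_mul_add_one,
      getElem_pathOfMaya_two_mul, ih (by omega), card_filter_le_eq_add_ite A (2 * n - (t + 1)),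
      show 2 * n - (t + 1) + 1 = 2 * n - t by omega, show 2 * n - (t + 1) = 2 * n - 1 - t by omega,
      card_filter_lt_add_one_eq_add_ite]
    split_ifs <;> simp_all <;> ring

theorem count_true_pathOfMaya (hA : A ⊆ range (2 * n)) : (pathOfMaya n A).count true = #A := by
  have hht := ht_pathOfMaya_two_mul hA le_rfl
  have hsplit : #{x ∈ A | 2 * n - n ≤ x} + #{x ∈ A | x < n} = #A := by
    rw [add_comm, ← card_filter_add_card_filter_not (s := A) (fun x => x < n)]
    simp only [not_lt, show 2 * n - n = n by omega]
  have htotal := List.count_false_add_count_true (pathOfMaya n A)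
  rw [ht, List.take_of_length_le (by simp), hsplit] at hht
  simp only [length_pathOfMaya] at htotal
  omega

theorem mayaOfPath_pathOfMaya (hA : A ⊆ range (2 * n)) : mayaOfPath n (pathOfMaya n A) = A := by
  ext x
  simp only [mayaOfPath, mem_filter, mem_range]
  constructor
  · rintro ⟨hx, hbit⟩
    split_ifs at hbit with hxn
    · rwa [List.getD_eq_getElem _ _ (by simp; omega), getElem_pathOfMaya_two_mul_add_one,
        decide_eq_true_eq] at hbit
    · rwa [List.getD_eq_getElem _ _ (by simp; omega), getElem_pathOfMaya_two_mul,
        decide_eq_true_eq, show 2 * n - 1 - (2 * n - 1 - x) = x by omega] at hbit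
  · intro hx
    have hx2n : x < 2 * n := mem_range.1 (hA hx)
    refine ⟨hx2n, ?_⟩
    split_ifs with hxn
    · rwa [List.getD_eq_getElem _ _ (by simp; omega), getElem_pathOfMaya_two_mul_add_one,
        decide_eq_true_eq]
    · rwa [List.getD_eq_getElem _ _ (by simp; omega), getElem_pathOfMaya_two_mul,
        decide_eq_true_eq, show 2 * n - 1 - (2 * n - 1 - x) = x by omega]

theorem pathOfMaya_mayaOfPath {w : List Bool} (hw : w.length = 2 * n) :
    pathOfMaya n (mayaOfPath n w) = w := by
  refine List.ext_getElem (by simp [hw]) fun m hm hmw => ?_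
  obtain ⟨t, rfl | rfl⟩ := Nat.even_or_odd' m
  · have hx : ¬ 2 * n - 1 - t < n := by simp at hm; omega
    simp only [getElem_pathOfMaya_two_mul, mayaOfPath, mem_filter, mem_range, if_neg hx,
      show 2 * (2 * n - 1 - (2 * n - 1 - t)) = 2 * t by simp at hm; omega,
      List.getD_eq_getElem _ _ hmw]
    simp at hm ⊢; omega
  · have hx : t < n := by simp at hm; omega
    simp only [getElem_pathOfMaya_two_mul_add_one, mayaOfPath, mem_filter, mem_range, if_pos hx,
      List.getD_eq_getElem _ _ hmw]
    simp; omega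

theorem pathOfMaya_bijOn :
    Set.BijOn (pathOfMaya n) {A | A ⊆ range (2 * n) ∧ #A = n} {w | IsGrandDyck n w} := by
  refine Set.InvOn.bijOn (f' := mayaOfPath n) ⟨fun A hA => mayaOfPath_pathOfMaya hA.1,
    fun w hw => pathOfMaya_mayaOfPath hw.1⟩ ?_ ?_
  · rintro A ⟨hA, hcard⟩
    exact ⟨length_pathOfMaya, by rw [count_true_pathOfMaya hA, hcard]⟩
  · rintro w ⟨hlen, hcount⟩
    have hsub : mayaOfPath n w ⊆ range (2 * n) := filter_subset _ _
    refine ⟨hsub, ?_⟩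
    rw [← count_true_pathOfMaya hsub, pathOfMaya_mayaOfPath hlen, hcount]

/-- The balance equation says that `A` has as many elements above `2n-1-t` as gaps below `t`.
These `t` index both the peaks at height one of `pathOfMaya n A` and the self-conjugate diagonal
hooks of the partition with Maya set `A`. -/
def balancedPairs (n : ℕ) (A : Finset ℕ) : Finset ℕ :=
  (range n).filter fun t =>
    2 * n - 1 - t ∈ A ∧ t ∉ A ∧ #{x ∈ A | 2 * n - t ≤ x} + #{x ∈ A | x < t} = t

theorem peak_pathOfMaya_iff (hA : A ⊆ range (2 * n)) {t : ℕ} (htn : t < n) :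
    ((pathOfMaya n A).getD (2 * t) false = true ∧ (pathOfMaya n A).getD (2 * t + 1) true = false ∧
      ht (pathOfMaya n A) (2 * t + 1) = 1) ↔ t ∈ balancedPairs n A := by
  rw [List.getD_eq_getElem _ _ (by simp; omega), List.getD_eq_getElem _ _ (by simp; omega),
    ht_add_one _ (by simp; omega), getElem_pathOfMaya_two_mul, getElem_pathOfMaya_two_mul_add_one,
    ht_pathOfMaya_two_mul hA htn.le]
  simp only [balancedPairs, mem_filter, mem_range, htn, true_and, decide_eq_true_eq,
    decide_eq_false_iff_not]
  by_cases hup : 2 * n - 1 - t ∈ A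
  · simp only [hup, if_true, true_and]
    constructor <;> rintro ⟨hdown, hbal⟩ <;> exact ⟨hdown, by omega⟩
  · simp [hup]

theorem phoGD_pathOfMaya (hA : A ⊆ range (2 * n)) :
    phoGD n (pathOfMaya n A) = #(balancedPairs n A) := by
  rw [phoGD, ← card_image_of_injective (balancedPairs n A) (f := (2 * · + 1))
    fun a b h => by simpa using h]
  congr 1
  ext i
  simp only [mem_filter, mem_Ico, mem_image]
  obtain ⟨t, rfl | rfl⟩ := Nat.even_or_odd' i
  · refine iff_of_false ?_ fun ⟨s, _, hs⟩ => by omega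
    rintro ⟨⟨hpos, hlt⟩, -, -, hht⟩
    rw [ht_pathOfMaya_two_mul hA (by omega)] at hht
    omega
  · constructor
    · rintro ⟨⟨-, hlt⟩, hpeak⟩
      exact ⟨t, (peak_pathOfMaya_iff hA (by omega)).1 hpeak, rfl⟩
    · rintro ⟨s, hs, hst⟩
      obtain rfl : s = t := by omega
      have hsn : s < n := mem_range.1 (mem_filter.1 hs).1
      exact ⟨⟨by omega, by omega⟩, (peak_pathOfMaya_iff hA hsn).2 hs⟩

end Path
section Partition

variable {n : ℕ} {f : Fin n → ℕ}

/-- The position of the vertical step of row `i` on the boundary of `f`, walked from the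
bottom-left to the top-right corner of the box. -/
def mayaPos (n : ℕ) (f : Fin n → ℕ) (i : Fin n) : ℕ :=
  f i + (n - 1 - i)

def mayaSet (n : ℕ) (f : Fin n → ℕ) : Finset ℕ :=
  univ.image (mayaPos n f)

theorem mayaPos_strictAnti (hf : Antitone f) : StrictAnti (mayaPos n f) := fun i j hij => by
  have hfij := hf hij.le
  have hj := j.isLt
  have hij' : i.val < j.val := hij
  simp only [mayaPos]
  omega

theorem mayaPos_mem_mayaSet (i : Fin n) : mayaPos n f i ∈ mayaSet n f :=
  mem_image_of_mem _ (mem_univ i)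

theorem mayaSet_subset_range (hf : IsBoxPartition n f) : mayaSet n f ⊆ range (2 * n) := by
  intro x hx
  obtain ⟨i, -, rfl⟩ := mem_image.1 hx
  have hi := i.isLt
  have hfi := hf.2 i
  simp only [mem_range, mayaPos]
  omega

theorem card_mayaSet (hf : Antitone f) : #(mayaSet n f) = n := by
  rw [mayaSet, card_image_of_injective _ (mayaPos_strictAnti hf).injective, card_univ,
    Fintype.card_fin]

theorem card_filter_mayaSet (hf : Antitone f) (p : ℕ → Prop) [DecidablePred p] :
    #{x ∈ mayaSet n f | p x} = #{i | p (mayaPos n f i)} := by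
  rw [mayaSet, filter_image, card_image_of_injective _ (mayaPos_strictAnti hf).injective]

theorem mayaSet_injOn : Set.InjOn (mayaSet n) {f | IsBoxPartition n f} := by
  intro f hf g hg hfg
  have hunique : ∀ h : Fin n → ℕ, IsBoxPartition n h → mayaSet n h = mayaSet n g →
      mayaPos n h ∘ Fin.rev = (mayaSet n g).orderEmbOfFin (card_mayaSet hg.1) :=
    fun h hh hhg => orderEmbOfFin_unique _ (fun i => hhg ▸ mayaPos_mem_mayaSet _)
      ((mayaPos_strictAnti hh.1).comp Fin.rev_strictAnti)
  have hpos := congrFun ((hunique f hf hfg).trans (hunique g hg rfl).symm)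
  funext i
  simpa [mayaPos] using hpos i.rev

/-- The partition whose Maya positions, read from the bottom row up, are `g`. -/
def ofMayaPos (g : Fin n → ℕ) (i : Fin n) : ℕ :=
  g i.rev - i.rev

theorem mayaPos_ofMayaPos {g : Fin n → ℕ} (hg : StrictMono g) :
    mayaPos n (ofMayaPos g) = g ∘ Fin.rev := by
  funext i
  have := Fin.val_le_of_strictMono hg i.rev
  simp only [mayaPos, ofMayaPos, Function.comp_apply, Fin.val_rev] at this ⊢
  omega

theorem isBoxPartition_ofMayaPos {g : Fin n → ℕ} (hg : StrictMono g)
    (hlt : ∀ j, g j < 2 * n) : IsBoxPartition n (ofMayaPos g) := by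
  have hgap : ∀ {a b : Fin n}, a ≤ b → g a + (b - a) ≤ g b := Fin.add_sub_le_of_strictMono hg
  refine ⟨fun i i' hii' => ?_, fun i => ?_⟩
  · have := hgap (Fin.rev_le_rev.2 hii')
    have := Fin.val_le_of_strictMono hg i'.rev
    simp only [ofMayaPos]
    omega
  · have := i.pos
    have hlast := hlt ⟨n - 1, by omega⟩
    have := hgap (a := i.rev) (b := ⟨n - 1, by omega⟩) (Fin.le_def.2 (by simp; omega))
    simp only [ofMayaPos, Fin.val_rev] at this ⊢
    omega

theorem mayaSet_surjOn :
    Set.SurjOn (mayaSet n) {f | IsBoxPartition n f} {A | A ⊆ range (2 * n) ∧ #A = n} := by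
  rintro A ⟨hA, hcard⟩
  set e := A.orderEmbOfFin hcard
  refine ⟨ofMayaPos e, isBoxPartition_ofMayaPos e.strictMono
    fun j => mem_range.1 (hA (orderEmbOfFin_mem A hcard j)), ?_⟩
  rw [mayaSet, mayaPos_ofMayaPos e.strictMono, ← image_image, image_univ_of_surjective
    Fin.rev_surjective, ← coe_inj, coe_image, coe_univ, Set.image_univ]
  exact range_orderEmbOfFin A hcard

theorem mayaSet_bijOn :
    Set.BijOn (mayaSet n) {f | IsBoxPartition n f} {A | A ⊆ range (2 * n) ∧ #A = n} :=
  ⟨fun _ hf => ⟨mayaSet_subset_range hf, card_mayaSet hf.1⟩, mayaSet_injOn, mayaSet_surjOn⟩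

theorem conjAt_eq_iff (hf : Antitone f) {c m : ℕ} (hm : m ≤ n) :
    conjAt n f c = m ↔ ∀ j, c ≤ f j ↔ j.val < m :=
  Fin.card_filter_eq_iff_of_antitone (fun _ _ hij h => h.trans (hf hij)) hm

/-- The hook of the diagonal cell `(i, i)` is self-conjugate iff the Maya position `n + i - f i`
mirroring the end of its arm is a gap that splits the parts into those `≥ i + 1` and the others. -/
theorem selfConjugateHook_iff (hf : Antitone f) {i : Fin n} (hi : i.val + 1 ≤ f i)
    (hfi : f i ≤ n) :
    ((∀ j, mayaPos n f j ≠ n + i - f i) ∧ ∀ j, (n + i - f i ≤ mayaPos n f j ↔ j.val < f i)) ↔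
      ∀ j, (i.val + 1 ≤ f j ↔ j.val < f i) := by
  constructor
  · rintro ⟨hgap, hsplit⟩ j
    have hj := j.isLt
    constructor
    · intro hij
      by_contra! hle
      have hlast := (hsplit ⟨f i, by omega⟩).not.2 (by simp)
      have hmono := hf (show (⟨f i, by omega⟩ : Fin n) ≤ j from Fin.le_def.2 hle)
      simp only [mayaPos, not_le] at hlast
      omega
    · intro hlt
      have hfirst := (hsplit ⟨f i - 1, by omega⟩).2 (by simp; omega)
      have hne := hgap ⟨f i - 1, by omega⟩
      have hmono := hf (show j ≤ (⟨f i - 1, by omega⟩ : Fin n) from Fin.le_def.2 (by simp; omega))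
      simp only [mayaPos] at hfirst hne
      omega
  · intro h
    have hpos : ∀ j : Fin n, (j.val < f i → n + i - f i < mayaPos n f j) ∧
        (f i ≤ j.val → mayaPos n f j < n + i - f i) := fun j => by
      have hj := j.isLt
      have hfj := h j
      simp only [mayaPos]
      constructor <;> intro <;> omega
    exact ⟨fun j => by have := hpos j; omega, fun j => by have := hpos j; omega⟩

theorem mem_balancedPairs_mayaSet_iff (hf : IsBoxPartition n f) {i : Fin n}
    (hi : i.val + 1 ≤ f i) :
    n + i - f i ∈ balancedPairs n (mayaSet n f) ↔ f i = conjAt n f (i.val + 1) := by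
  have hfi := hf.2 i
  have hiLt := i.isLt
  set t := n + i - f i
  have hupper : #{x ∈ mayaSet n f | 2 * n - t ≤ x} = i := by
    rw [card_filter_mayaSet hf.1]
    have hcongr : ∀ j, 2 * n - t ≤ mayaPos n f j ↔ j.val < i := fun j => by
      rw [← Fin.lt_def, ← StrictAnti.lt_iff_gt (mayaPos_strictAnti hf.1)]
      simp only [mayaPos]
      omega
    rw [filter_congr fun j _ => hcongr j, Fin.card_filter_val_lt, min_eq_right hiLt.le]
  have hlower : #{x ∈ mayaSet n f | x < t} + #{j | t ≤ mayaPos n f j} = n := by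
    rw [card_filter_mayaSet hf.1, add_comm]
    simpa only [not_le, card_univ, Fintype.card_fin] using
      card_filter_add_card_filter_not (s := univ) fun j => t ≤ mayaPos n f j
  have harm : 2 * n - 1 - t ∈ mayaSet n f := by
    convert mayaPos_mem_mayaSet (f := f) i using 1
    simp only [mayaPos]
    omega
  have hgap : t ∉ mayaSet n f ↔ ∀ j, mayaPos n f j ≠ t := by
    simp [mayaSet]
  have hdown : ∀ ⦃j j' : Fin n⦄, j ≤ j' → t ≤ mayaPos n f j' → t ≤ mayaPos n f j :=
    fun _ _ hjj' h => h.trans ((mayaPos_strictAnti hf.1).antitone hjj')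
  rw [eq_comm, conjAt_eq_iff hf.1 hfi, ← selfConjugateHook_iff hf.1 hi hfi,
    ← Fin.card_filter_eq_iff_of_antitone hdown hfi, ← hgap]
  simp only [balancedPairs, mem_filter, mem_range, harm, hupper, true_and]
  have hcard := card_filter_le univ fun j => t ≤ mayaPos n f j
  simp only [card_univ, Fintype.card_fin] at hcard
  constructor
  · rintro ⟨-, hnot, hbal⟩; exact ⟨hnot, by omega⟩
  · rintro ⟨hnot, hbal⟩; exact ⟨by omega, hnot, by omega⟩

theorem dshPart_eq_card_balancedPairs (hf : IsBoxPartition n f) :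
    dshPart n f = #(balancedPairs n (mayaSet n f)) := by
  refine card_bij (fun i _ => n + i - f i) (fun i hi => ?_) (fun a ha b hb hab => ?_) fun t ht => ?_
  · obtain ⟨hi, hconj⟩ := (mem_filter.1 hi).2
    exact (mem_balancedPairs_mayaSet_iff hf hi).2 hconj
  · have := hf.2 a
    have := hf.2 b
    have := (mem_filter.1 ha).2.1
    have := (mem_filter.1 hb).2.1
    apply (mayaPos_strictAnti hf.1).injective
    simp only [mayaPos]
    omega
  · obtain ⟨htn, harm, -⟩ := mem_filter.1 ht
    obtain ⟨i, -, hi⟩ := mem_image.1 harm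
    have hiLt := i.isLt
    simp only [mayaPos, mem_range] at hi htn
    have hdiag : i.val + 1 ≤ f i := by omega
    have ht_eq : n + i - f i = t := by omega
    exact ⟨i, mem_filter.2 ⟨mem_univ _, hdiag, (mem_balancedPairs_mayaSet_iff hf hdiag).1
      (ht_eq ▸ ht)⟩, ht_eq⟩

end Partition

/-- The number of partitions in `P^□_n` with `dsh(λ) = k` equals the number of grand Dyck
paths of semilength `n` with `k` peaks at height 1. -/
theorem boxPartition_dsh_eq_grandDyck_pho (n k : ℕ) :
    {f : Fin n → ℕ | IsBoxPartition n f ∧ dshPart n f = k}.ncard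
      = {w : List Bool | IsGrandDyck n w ∧ phoGD n w = k}.ncard := by
  have hpho : ∀ f ∈ {f | IsBoxPartition n f},
      phoGD n ((pathOfMaya n ∘ mayaSet n) f) = k ↔ dshPart n f = k := fun f hf => by
    rw [Function.comp_apply, phoGD_pathOfMaya (mayaSet_subset_range hf),
      dshPart_eq_card_balancedPairs hf]
  exact ((pathOfMaya_bijOn.comp mayaSet_bijOn).sep_of_iff hpho).ncard_eq
end

section
/- Let T ∈ ℤ[[x,y,s]] be the power series T = Σ_{M ∈ 𝒢ℳ²} s^{h1⁰(M)} x^{2(d(M)+h1(M))} y^{u(M)+h2(M)} (summing over all bicolored grand Motzkin paths; each monomial receives finitely many contributions). Then Σ_{B ∈ 𝒰ℬ} s^{ds(B)} x^{e(B)} y^{n(B)} = y(1+x−y)·T − y in ℤ[[x,y,s]]. (This is the identity Σ_B s^{ds(B)} x^{e(B)} y^{n(B)} = y(1+x−y)/((1−s)x² + √(((x+1)²−y)((x−1)²−y))) − y.) -/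
/-- The series `T = Σ_{M ∈ 𝒢ℳ²} s^{h1⁰(M)} x^{2(d(M)+h1(M))} y^{u(M)+h2(M)}` in `ℤ[[x,y,s]]`.
Variable `0` is `x`, variable `1` is `y`, variable `2` is `s`. -/
noncomputable def T : MvPowerSeries (Fin 3) ℤ := fun d =>
  ({w : List BStep | IsBicoloredGrandMotzkin w ∧
      2 * (w.count BStep.D + w.count BStep.H1) = d 0 ∧
      w.count BStep.U + w.count BStep.H2 = d 1 ∧
      h1zero w = d 2}.ncard : ℤ)

/-- A unimodal bargraph with centered maximum: a composition `(a_1,…,a_k)` with `k ≥ 1`,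
all parts at least 1, with `a_1 ≤ ⋯ ≤ a_{⌊(k+1)/2⌋}` and `a_{⌈(k+1)/2⌉} ≥ ⋯ ≥ a_k`. -/
def IsUB (L : List ℕ) : Prop :=
  L ≠ [] ∧ (∀ a ∈ L, 1 ≤ a) ∧
    (∀ i, i + 2 ≤ (L.length + 1) / 2 → L.getD i 0 ≤ L.getD (i + 1) 0) ∧
    (∀ i, (L.length + 2) / 2 ≤ i + 1 → i + 2 ≤ L.length → L.getD (i + 1) 0 ≤ L.getD i 0)

/-- The height `n(B)` of a bargraph: the maximum of its column heights. -/
def maxComp (L : List ℕ) : ℕ := L.foldr max 0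

/-- The degree of symmetry of a composition `(a_1,…,a_k)`:
`#{i : 1 ≤ i ≤ k/2, a_i = a_{k+1−i}}`. -/
def dsComp (L : List ℕ) : ℕ :=
  ((Finset.range (L.length / 2)).filter fun i =>
    L.getD i 0 = L.getD (L.length - 1 - i) 0).card

/-- The series `Σ_{B ∈ 𝒰ℬ} s^{ds(B)} x^{e(B)} y^{n(B)}` in `ℤ[[x,y,s]]`, where `e(B)` is the
width (number of columns) and `n(B)` the height of the bargraph `B`. -/
noncomputable def UBgf : MvPowerSeries (Fin 3) ℤ := fun d =>
  ({L : List ℕ | IsUB L ∧ L.length = d 0 ∧ maxComp L = d 1 ∧ dsComp L = d 2}.ncard : ℤ)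

/-!
Read a bicolored grand Motzkin path `M` as two binary words of equal length, the first marking
its steps `D`, `H1` and the second its steps `U`, `H1`. A binary word with `r` letters `true` and
`β` letters `false` is the same thing as a weakly increasing sequence of length `r` in `[1, β + 1]`
(its `levels`: one plus the number of `false`s before each `true`). A balanced path with
`d(M) + h1(M) = r` and `u(M) + h2(M) = β` thus becomes a pair `(u, v)` of such sequences, and its
`H1` steps on the x-axis are exactly the indices where `u` and `v` agree.

A unimodal bargraph of width `2r + 1` and height `b` is `u ++ b :: v.reverse`, and one of width `2r`
is `u ++ v.reverse`, with `u, v` weakly increasing of length `r` in `[1, b]` (reaching `b` in the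
even case); its degree of symmetry is again the number of agreements of `u` and `v`. So at height
`b + 1` the odd widths `2r + 1` are counted by the coefficient of `x^(2r) y^b` in `T`, reached
through `x y T`, and the even widths `2r` by the difference of the coefficients of `x^(2r) y^b` and
`x^(2r) y^(b-1)` in `T`, reached through `y T - y² T`. The monomials of `T` of odd `x`-degree
vanish, and `- y` cancels the contribution of the empty path to `y T`.
-/

namespace MvPowerSeries

theorem coeff_X_mul {σ R : Type*} [Semiring R] [DecidableEq σ] (i : σ) (f : MvPowerSeries σ R)
    (n : σ →₀ ℕ) : coeff n (X i * f) = if n i = 0 then 0 else coeff (n - Finsupp.single i 1) f := by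
  rw [X_def, coeff_monomial_mul, one_mul]
  by_cases h : n i = 0 <;> simp [h, Finsupp.single_le_iff, Nat.one_le_iff_ne_zero]

end MvPowerSeries

namespace BStep

def bits : BStep → Bool × Bool
  | U => (false, true)
  | D => (true, false)
  | H1 => (true, true)
  | H2 => (false, false)

def ofBits : Bool × Bool → BStep
  | (false, true) => U
  | (true, false) => D
  | (true, true) => H1
  | (false, false) => H2

theorem bits_injective : Function.Injective bits := by
  intro a b h
  cases a <;> cases b <;> first | rfl | cases h

theorem bits_ofBits (p : Bool × Bool) : bits (ofBits p) = p := by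
  obtain ⟨_ | _, _ | _⟩ := p <;> rfl

end BStep

namespace UnimodalBargraph

open BStep

def levels : List Bool → ℕ → List ℕ
  | [], _ => []
  | true :: P, h => h :: levels P h
  | false :: P, h => levels P (h + 1)

def ofLevels : List ℕ → ℕ → ℕ → List Bool
  | [], h, b => List.replicate (b - h) false
  | a :: u, h, b => List.replicate (a - h) false ++ true :: ofLevels u a b

theorem length_levels (P : List Bool) (h : ℕ) : (levels P h).length = P.count true := by
  induction P generalizing h with
  | nil => rfl
  | cons x P ih => cases x <;> simp [levels, ih]

theorem le_of_mem_levels {P : List Bool} {h a : ℕ} (ha : a ∈ levels P h) : h ≤ a := by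
  induction P generalizing h with
  | nil => simp [levels] at ha
  | cons x P ih =>
    cases x
    · exact (Nat.le_succ h).trans (ih ha)
    · rcases List.mem_cons.mp ha with rfl | ha
      · exact le_rfl
      · exact ih ha

theorem le_add_count_false_of_mem_levels {P : List Bool} {h a : ℕ} (ha : a ∈ levels P h) :
    a ≤ h + P.count false := by
  induction P generalizing h with
  | nil => simp [levels] at ha
  | cons x P ih =>
    cases x
    · have := ih ha
      simp only [List.count_cons_self]
      omega
    · rcases List.mem_cons.mp ha with rfl | ha
      · exact Nat.le_add_right _ _
      · simpa using ih ha

theorem pairwise_levels (P : List Bool) (h : ℕ) : (levels P h).Pairwise (· ≤ ·) := by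
  induction P generalizing h with
  | nil => exact List.Pairwise.nil
  | cons x P ih =>
    cases x
    · exact ih (h + 1)
    · exact List.pairwise_cons.mpr ⟨fun _ => le_of_mem_levels, ih h⟩

theorem getD_levels_add_lt {P : List Bool} {h j : ℕ} (hj : j < (levels P h).length) :
    (levels P h).getD j 0 + j < P.length + h := by
  induction P generalizing h j with
  | nil => simp [levels] at hj
  | cons x P ih =>
    cases x
    · have := ih (h := h + 1) hj
      simp only [levels, List.length_cons] at this ⊢
      omega
    · cases j with
      | zero => simp [levels]
      | succ j =>
        have := ih (h := h) (j := j) (by simpa [levels] using hj)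
        simp only [levels, List.getD_cons_succ, List.length_cons]
        omega

theorem levels_append_true (P : List Bool) (h : ℕ) :
    levels (P ++ [true]) h = levels P h ++ [h + P.count false] := by
  induction P generalizing h with
  | nil => rfl
  | cons x P ih =>
    cases x
    · simp only [List.cons_append, levels, ih, List.count_cons_self]
      congr 2
      omega
    · simp [levels, ih]

theorem levels_append_false (P : List Bool) (h : ℕ) : levels (P ++ [false]) h = levels P h := by
  induction P generalizing h with
  | nil => rfl
  | cons x P ih => cases x <;> simp [levels, ih]

theorem eq_of_levels_eq {P Q : List Bool} {h : ℕ} (hl : P.length = Q.length)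
    (he : levels P h = levels Q h) : P = Q := by
  induction P generalizing Q h with
  | nil => exact (List.length_eq_zero_iff.mp hl.symm).symm
  | cons x P ih =>
    obtain _ | ⟨y, Q⟩ := Q
    · simp at hl
    have hl' : P.length = Q.length := by simpa using hl
    cases x <;> cases y <;> simp only [levels, List.cons.injEq] at he
    · rw [ih hl' he]
    · have := le_of_mem_levels (he ▸ List.mem_cons_self : h ∈ levels P (h + 1))
      omega
    · have := le_of_mem_levels (he ▸ List.mem_cons_self : h ∈ levels Q (h + 1))
      omega
    · rw [ih hl' he.2]

theorem levels_replicate_false_append (k : ℕ) (P : List Bool) (h : ℕ) :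
    levels (List.replicate k false ++ P) h = levels P (h + k) := by
  induction k generalizing h with
  | zero => rfl
  | succ k ih =>
    rw [List.replicate_succ, List.cons_append, levels, ih]
    congr 1
    omega

theorem levels_ofLevels {u : List ℕ} {h : ℕ} (b : ℕ) (hu : u.Pairwise (· ≤ ·))
    (hlo : ∀ a ∈ u, h ≤ a) : levels (ofLevels u h b) h = u := by
  induction u generalizing h with
  | nil => simpa [ofLevels, levels] using levels_replicate_false_append (b - h) [] h
  | cons a u ih =>
    obtain ⟨hau, hu⟩ := List.pairwise_cons.mp hu
    rw [ofLevels, levels_replicate_false_append, Nat.add_sub_cancel' (hlo a List.mem_cons_self),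
      levels, ih hu hau]

theorem count_true_ofLevels (u : List ℕ) (h b : ℕ) : (ofLevels u h b).count true = u.length := by
  induction u generalizing h with
  | nil => simp [ofLevels, List.count_replicate]
  | cons a u ih => simp [ofLevels, List.count_replicate, ih]

theorem count_false_ofLevels {u : List ℕ} {h b : ℕ} (hu : u.Pairwise (· ≤ ·))
    (hlo : ∀ a ∈ u, h ≤ a) (hhi : ∀ a ∈ u, a ≤ b) (hhb : h ≤ b) :
    (ofLevels u h b).count false = b - h := by
  induction u generalizing h with
  | nil => simp [ofLevels]
  | cons a u ih =>
    obtain ⟨hau, hu⟩ := List.pairwise_cons.mp hu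
    have hha := hlo a List.mem_cons_self
    have hab := hhi a List.mem_cons_self
    simp only [ofLevels, List.count_append, List.count_replicate_self, List.count_cons,
      ih hu hau (fun x hx => hhi x (List.mem_cons_of_mem _ hx)) hab]
    simp
    omega

def IsSortedSeq (r b : ℕ) (u : List ℕ) : Prop :=
  u.length = r ∧ u.Pairwise (· ≤ ·) ∧ ∀ a ∈ u, 1 ≤ a ∧ a ≤ b

theorem isSortedSeq_levels (P : List Bool) :
    IsSortedSeq (P.count true) (P.count false + 1) (levels P 1) :=
  ⟨length_levels P 1, pairwise_levels P 1, fun _ ha =>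
    ⟨le_of_mem_levels ha, (le_add_count_false_of_mem_levels ha).trans (Nat.add_comm _ _).le⟩⟩

theorem exists_levels_eq {r β : ℕ} {u : List ℕ} (hu : IsSortedSeq r (β + 1) u) :
    ∃ P : List Bool, P.count true = r ∧ P.count false = β ∧ levels P 1 = u := by
  obtain ⟨hlen, hsort, hbd⟩ := hu
  refine ⟨ofLevels u 1 (β + 1), by rw [count_true_ofLevels, hlen], ?_,
    levels_ofLevels _ hsort fun a ha => (hbd a ha).1⟩
  rw [count_false_ofLevels hsort (fun a ha => (hbd a ha).1) (fun a ha => (hbd a ha).2) (by omega)]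
  omega

def agreeCount (u v : List ℕ) : ℕ :=
  ((Finset.range (min u.length v.length)).filter fun j => u.getD j 0 = v.getD j 0).card

theorem agreeCount_comm (u v : List ℕ) : agreeCount u v = agreeCount v u := by
  simp only [agreeCount, min_comm u.length, eq_comm]

theorem agreeCount_nil_left (v : List ℕ) : agreeCount [] v = 0 := by
  simp [agreeCount]

theorem agreeCount_append_singleton (u v : List ℕ) (a : ℕ) :
    agreeCount (u ++ [a]) v =
      agreeCount u v + if u.length < v.length ∧ a = v.getD u.length 0 then 1 else 0 := by
  have hprefix : ∀ n ≤ u.length, ((Finset.range n).filter fun j => (u ++ [a]).getD j 0 = v.getD j 0)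
      = (Finset.range n).filter fun j => u.getD j 0 = v.getD j 0 :=
    fun n hn => Finset.filter_congr fun j hj => by
      rw [List.getD_append _ _ _ _ (by simp at hj; omega)]
  unfold agreeCount
  rw [List.length_append, List.length_singleton]
  by_cases hlt : u.length < v.length
  · rw [min_eq_left (by omega : u.length + 1 ≤ v.length), min_eq_left hlt.le,
      Finset.range_add_one, Finset.filter_insert, hprefix _ le_rfl,
      List.getD_append_right _ _ _ _ le_rfl, Nat.sub_self, List.getD_cons_zero]
    split_ifs with h₁ h₂ h₂
    · exact Finset.card_insert_of_notMem (by simp)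
    · exact absurd ⟨hlt, h₁⟩ h₂
    · exact absurd h₂.2 h₁
    · rfl
  · rw [min_eq_right (by omega : v.length ≤ u.length + 1), min_eq_right (by omega),
      hprefix _ (by omega), if_neg (fun h => hlt h.1), add_zero]

theorem getD_levels_lt_of_length_lt {P Q : List Bool} {h : ℕ} (hPQ : P.length = Q.length)
    (hlt : (levels P h).length < (levels Q h).length) :
    (levels Q h).getD (levels P h).length 0 < h + P.count false := by
  have hbound := getD_levels_add_lt hlt
  have hcount := List.count_true_add_count_false P
  rw [length_levels] at hbound ⊢
  omega

theorem agreeCount_levels_append {P Q : List Bool} (hPQ : P.length = Q.length) (x y : Bool)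
    (h : ℕ) :
    agreeCount (levels (P ++ [x]) h) (levels (Q ++ [y]) h) = agreeCount (levels P h) (levels Q h) +
      if x = true ∧ y = true ∧ P.count true = Q.count true then 1 else 0 := by
  -- A newly appended level exceeds the level at the same index of the longer word, so a new
  -- agreement arises only when both words receive their `true` at the same index.
  have hP := getD_levels_lt_of_length_lt (h := h) hPQ
  have hQ := getD_levels_lt_of_length_lt (h := h) hPQ.symm
  simp only [length_levels] at hP hQ
  cases x <;> cases y <;>
    simp only [levels_append_false, levels_append_true, Bool.false_eq_true, false_and, and_false,
      if_false, add_zero, true_and]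
  · rw [agreeCount_comm, agreeCount_append_singleton, agreeCount_comm, length_levels,
      length_levels, if_neg (fun h' => (hQ h'.1).ne' h'.2), add_zero]
  · rw [agreeCount_append_singleton, length_levels, length_levels,
      if_neg (fun h' => (hP h'.1).ne' h'.2), add_zero]
  · rw [agreeCount_append_singleton, agreeCount_comm, agreeCount_append_singleton,
      agreeCount_comm (levels Q h), List.length_append, List.length_singleton]
    simp only [length_levels]
    rcases lt_trichotomy (P.count true) (Q.count true) with hlt | heq | hgt
    · rw [List.getD_append _ _ _ _ (by rwa [length_levels]), if_neg (fun h' => hlt.not_gt h'.1),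
        if_neg (fun h' => (hP hlt).ne' h'.2), if_neg hlt.ne]
    · have hfalse : P.count false = Q.count false := by
        have := List.count_true_add_count_false P
        have := List.count_true_add_count_false Q
        omega
      rw [List.getD_append_right _ _ _ _ (by rw [length_levels, heq]), length_levels, heq,
        Nat.sub_self, List.getD_cons_zero, if_neg (fun h' => lt_irrefl _ h'.1),
        if_pos ⟨Nat.lt_succ_self _, by rw [hfalse]⟩, if_pos rfl]
    · rw [if_neg (fun h' => (hQ hgt).ne' h'.2), if_neg (fun h' => by omega), if_neg hgt.ne']

def fstWord (w : List BStep) : List Bool := w.map fun s => s.bits.1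

def sndWord (w : List BStep) : List Bool := w.map fun s => s.bits.2

theorem count_fstWord_sndWord (w : List BStep) :
    (fstWord w).count true = w.count D + w.count H1 ∧
    (fstWord w).count false = w.count U + w.count H2 ∧
    (sndWord w).count true = w.count U + w.count H1 ∧
    (sndWord w).count false = w.count D + w.count H2 := by
  induction w with
  | nil => simp [fstWord, sndWord]
  | cons s w ih =>
    obtain ⟨h₁, h₂, h₃, h₄⟩ := ih
    simp only [fstWord, sndWord, List.map_cons, List.count_cons] at h₁ h₂ h₃ h₄ ⊢
    rw [h₁, h₂, h₃, h₄]
    cases s <;> simp [bits] <;> omega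

theorem length_fstWord (w : List BStep) : (fstWord w).length = w.length := List.length_map _

theorem length_sndWord (w : List BStep) : (sndWord w).length = w.length := List.length_map _

theorem eq_of_fstWord_eq_of_sndWord_eq {w₁ w₂ : List BStep} (h₁ : fstWord w₁ = fstWord w₂)
    (h₂ : sndWord w₁ = sndWord w₂) : w₁ = w₂ := by
  apply List.map_injective_iff.mpr bits_injective
  simpa only [fstWord, sndWord, List.zip_map'] using congrArg₂ List.zip h₁ h₂

theorem fstWord_sndWord_ofBits {P Q : List Bool} (h : P.length = Q.length) :
    fstWord ((P.zip Q).map ofBits) = P ∧ sndWord ((P.zip Q).map ofBits) = Q := by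
  simp only [fstWord, sndWord, List.map_map, Function.comp_def, bits_ofBits]
  exact ⟨List.map_fst_zip h.le, List.map_snd_zip h.ge⟩

theorem h1zero_append_singleton (w : List BStep) (s : BStep) :
    h1zero (w ++ [s]) = h1zero w + if s = H1 ∧ w.count U = w.count D then 1 else 0 := by
  have hprefix : ((Finset.range w.length).filter fun i =>
      (w ++ [s]).getD i U = H1 ∧ ((w ++ [s]).take i).count U = ((w ++ [s]).take i).count D) =
      (Finset.range w.length).filter fun i =>
      w.getD i U = H1 ∧ (w.take i).count U = (w.take i).count D :=
    Finset.filter_congr fun i hi => by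
      rw [Finset.mem_range] at hi
      rw [List.getD_append _ _ _ _ hi, List.take_append_of_le_length hi.le]
  unfold h1zero
  rw [List.length_append, List.length_singleton, Finset.range_add_one, Finset.filter_insert,
    List.getD_append_right _ _ _ _ le_rfl, Nat.sub_self, List.getD_cons_zero, List.take_left,
    hprefix]
  split_ifs
  · exact Finset.card_insert_of_notMem (by simp)
  · rfl

theorem h1zero_eq_agreeCount (w : List BStep) :
    h1zero w = agreeCount (levels (fstWord w) 1) (levels (sndWord w) 1) := by
  induction w using List.reverseRecOn with
  | nil => rfl
  | append_singleton w s ih =>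
    simp only [fstWord, sndWord, List.map_append, List.map_singleton] at ih ⊢
    rw [h1zero_append_singleton, agreeCount_levels_append (by simp), ih]
    obtain ⟨hD, -, hU, -⟩ := count_fstWord_sndWord w
    simp only [fstWord, sndWord] at hD hU
    rw [hD, hU]
    cases s <;> simp [bits, eq_comm]

def levelPairs (r b c : ℕ) : Set (List ℕ × List ℕ) :=
  {p | IsSortedSeq r b p.1 ∧ IsSortedSeq r b p.2 ∧ agreeCount p.1 p.2 = c}

def motzkinPaths (r β c : ℕ) : Set (List BStep) :=
  {w | IsBicoloredGrandMotzkin w ∧ w.count D + w.count H1 = r ∧ w.count U + w.count H2 = β ∧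
    h1zero w = c}

def levelPair (w : List BStep) : List ℕ × List ℕ := (levels (fstWord w) 1, levels (sndWord w) 1)

theorem count_words_of_mem_motzkinPaths {w : List BStep} {r β c : ℕ} (hw : w ∈ motzkinPaths r β c) :
    (fstWord w).count true = r ∧ (fstWord w).count false = β ∧
    (sndWord w).count true = r ∧ (sndWord w).count false = β := by
  obtain ⟨hUD, hr, hβ, -⟩ := hw
  obtain ⟨h₁, h₂, h₃, h₄⟩ := count_fstWord_sndWord w
  unfold IsBicoloredGrandMotzkin at hUD
  omega

theorem image_levelPair_motzkinPaths (r β c : ℕ) :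
    levelPair '' motzkinPaths r β c = levelPairs r (β + 1) c := by
  ext p
  constructor
  · rintro ⟨w, hw, rfl⟩
    obtain ⟨hP₁, hP₂, hQ₁, hQ₂⟩ := count_words_of_mem_motzkinPaths hw
    refine ⟨?_, ?_, (h1zero_eq_agreeCount w).symm.trans hw.2.2.2⟩
    · rw [← hP₁, ← hP₂]
      exact isSortedSeq_levels (fstWord w)
    · rw [← hQ₁, ← hQ₂]
      exact isSortedSeq_levels (sndWord w)
  · rintro ⟨hu, hv, huv⟩
    obtain ⟨P, hP₁, hP₂, hPu⟩ := exists_levels_eq hu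
    obtain ⟨Q, hQ₁, hQ₂, hQv⟩ := exists_levels_eq hv
    have hPQ : P.length = Q.length := by
      rw [← List.count_true_add_count_false P, ← List.count_true_add_count_false Q]
      omega
    obtain ⟨hfst, hsnd⟩ := fstWord_sndWord_ofBits hPQ
    obtain ⟨h₁, h₂, h₃, h₄⟩ := count_fstWord_sndWord ((P.zip Q).map ofBits)
    rw [hfst] at h₁ h₂
    rw [hsnd] at h₃ h₄
    refine ⟨(P.zip Q).map ofBits, ⟨?_, by omega, by omega, ?_⟩, ?_⟩
    · show List.count U _ = List.count D _
      omega
    · rw [h1zero_eq_agreeCount, hfst, hsnd, hPu, hQv, huv]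
    · rw [levelPair, hfst, hsnd, hPu, hQv]

theorem injOn_levelPair_motzkinPaths (r β c : ℕ) : Set.InjOn levelPair (motzkinPaths r β c) := by
  intro w₁ hw₁ w₂ hw₂ h
  obtain ⟨hP₁, hP₂, hQ₁, hQ₂⟩ := count_words_of_mem_motzkinPaths hw₁
  obtain ⟨hP₁', hP₂', hQ₁', hQ₂'⟩ := count_words_of_mem_motzkinPaths hw₂
  have hlen : w₁.length = w₂.length := by
    rw [← length_fstWord, ← length_fstWord, ← List.count_true_add_count_false,
      ← List.count_true_add_count_false (fstWord w₂)]
    omega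
  obtain ⟨hfst, hsnd⟩ := Prod.ext_iff.mp h
  exact eq_of_fstWord_eq_of_sndWord_eq
    (eq_of_levels_eq (by rw [length_fstWord, length_fstWord, hlen]) hfst)
    (eq_of_levels_eq (by rw [length_sndWord, length_sndWord, hlen]) hsnd)

theorem ncard_motzkinPaths (r β c : ℕ) :
    (motzkinPaths r β c).ncard = (levelPairs r (β + 1) c).ncard := by
  rw [← image_levelPair_motzkinPaths, (injOn_levelPair_motzkinPaths r β c).ncard_image]

theorem pairwise_le_take_iff_getD {L : List ℕ} {m : ℕ} (hm : m ≤ L.length) :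
    (L.take m).Pairwise (· ≤ ·) ↔ ∀ i, i + 2 ≤ m → L.getD i 0 ≤ L.getD (i + 1) 0 := by
  rw [← List.isChain_iff_pairwise, List.isChain_iff_getElem]
  simp only [List.length_take, List.getElem_take]
  refine ⟨fun h i hi => ?_, fun h i hi => ?_⟩
  · simpa only [List.getD_eq_getElem _ _ (by omega : i < L.length),
      List.getD_eq_getElem _ _ (by omega : i + 1 < L.length)] using h i (by omega)
  · simpa only [List.getD_eq_getElem _ _ (by omega : i < L.length),
      List.getD_eq_getElem _ _ (by omega : i + 1 < L.length)] using h i (by omega)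

theorem pairwise_ge_drop_iff_getD {L : List ℕ} {d : ℕ} :
    (L.drop d).Pairwise (· ≥ ·) ↔
      ∀ i, d ≤ i → i + 2 ≤ L.length → L.getD (i + 1) 0 ≤ L.getD i 0 := by
  rw [← List.isChain_iff_pairwise, List.isChain_iff_getElem]
  simp only [List.length_drop, List.getElem_drop, ← Nat.add_assoc, ge_iff_le]
  refine ⟨fun h i hd hi => ?_, fun h i hi => ?_⟩
  · obtain ⟨j, rfl⟩ := Nat.exists_eq_add_of_le hd
    simpa only [List.getD_eq_getElem _ _ (by omega : d + j < L.length),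
      List.getD_eq_getElem _ _ (by omega : d + j + 1 < L.length)] using h j (by omega)
  · simpa only [List.getD_eq_getElem _ _ (by omega : d + i < L.length),
      List.getD_eq_getElem _ _ (by omega : d + i + 1 < L.length)] using
      h (d + i) (by omega) (by omega)

theorem isUB_iff {L : List ℕ} :
    IsUB L ↔ L ≠ [] ∧ (∀ a ∈ L, 1 ≤ a) ∧ (L.take ((L.length + 1) / 2)).Pairwise (· ≤ ·) ∧
      (L.drop (L.length / 2)).Pairwise (· ≥ ·) := by
  rw [IsUB, pairwise_le_take_iff_getD (by omega), pairwise_ge_drop_iff_getD]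
  have hmid : ∀ i, (L.length + 2) / 2 ≤ i + 1 ↔ L.length / 2 ≤ i := fun i => by omega
  simp only [hmid]

theorem maxComp_eq_iff {L : List ℕ} (hL : L ≠ []) {b : ℕ} :
    maxComp L = b ↔ b ∈ L ∧ ∀ a ∈ L, a ≤ b := by
  constructor
  · rintro rfl
    exact ⟨List.maximum_mem (List.foldr_max_of_ne_nil hL).symm,
      fun a ha => List.le_max_of_le ha le_rfl⟩
  · rintro ⟨hb, hle⟩
    exact le_antisymm (List.max_le_of_forall_le L b hle) (List.le_max_of_le hb le_rfl)

theorem dsComp_append_append_reverse {u mid v : List ℕ} (huv : u.length = v.length)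
    (hmid : mid.length ≤ 1) : dsComp (u ++ mid ++ v.reverse) = agreeCount u v := by
  have hlen : (u ++ mid ++ v.reverse).length / 2 = v.length := by simp; omega
  rw [dsComp, agreeCount, hlen, huv, min_self]
  refine congrArg _ (Finset.filter_congr fun i hi => ?_)
  rw [Finset.mem_range] at hi
  rw [List.getD_append _ _ _ _ (by simp; omega), List.getD_append _ _ _ _ (by omega),
    List.getD_append_right _ _ _ _ (by simp; omega), List.getD_reverse _ (by simp; omega)]
  have hidx : v.length - 1 - ((u ++ mid ++ v.reverse).length - 1 - i - (u ++ mid).length) = i := by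
    simp only [List.length_append, List.length_reverse]
    omega
  rw [hidx]

def bargraphs (a b c : ℕ) : Set (List ℕ) :=
  {L | IsUB L ∧ L.length = a ∧ maxComp L = b ∧ dsComp L = c}

theorem mem_bargraphs_odd {u v : List ℕ} {m r b c : ℕ} (hu : u.length = r) (hv : v.length = r) :
    u ++ m :: v.reverse ∈ bargraphs (2 * r + 1) b c ↔
      (u, v) ∈ levelPairs r b c ∧ m = b ∧ 1 ≤ b := by
  have hL : u ++ m :: v.reverse = u ++ [m] ++ v.reverse := by simp
  have hlen : (u ++ [m] ++ v.reverse).length = 2 * r + 1 := by simp; omega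
  have htake : (u ++ [m] ++ v.reverse).take ((2 * r + 1 + 1) / 2) = u ++ [m] :=
    List.take_left' (by simp; omega)
  have hdrop : (u ++ [m] ++ v.reverse).drop ((2 * r + 1) / 2) = m :: v.reverse := by
    rw [List.append_assoc]; exact List.drop_left' (by omega)
  rw [hL]
  simp only [bargraphs, Set.mem_ofPred_eq, isUB_iff, hlen, htake, hdrop,
    maxComp_eq_iff (by simp : u ++ [m] ++ v.reverse ≠ []),
    dsComp_append_append_reverse (hu.trans hv.symm) (by simp : [m].length ≤ 1), levelPairs,
    IsSortedSeq, hu, hv, List.pairwise_append, List.pairwise_cons, List.pairwise_reverse,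
    List.mem_append, List.mem_cons, List.mem_reverse]
  -- `m` bounds both halves, so the maximum is `b` exactly when `m = b`
  grind

theorem mem_bargraphs_even {u v : List ℕ} {r b c : ℕ} (hu : u.length = r) (hv : v.length = r)
    (hr : 1 ≤ r) :
    u ++ v.reverse ∈ bargraphs (2 * r) (b + 1) c ↔
      (u, v) ∈ levelPairs r (b + 1) c \ levelPairs r b c := by
  have hlen : (u ++ v.reverse).length = 2 * r := by simp; omega
  have htake : (u ++ v.reverse).take ((2 * r + 1) / 2) = u := List.take_left' (by omega)
  have hdrop : (u ++ v.reverse).drop (2 * r / 2) = v.reverse := List.drop_left' (by omega)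
  have hne : u ++ v.reverse ≠ [] := List.ne_nil_of_length_pos (by omega)
  have hds : dsComp (u ++ v.reverse) = agreeCount u v := by
    simpa using dsComp_append_append_reverse (mid := []) (hu.trans hv.symm) (by simp)
  simp only [bargraphs, Set.mem_ofPred_eq, isUB_iff, hlen, htake, hdrop, maxComp_eq_iff hne, hds,
    Set.mem_sdiff, levelPairs, IsSortedSeq, hu, hv, List.pairwise_reverse, List.mem_append,
    List.mem_reverse]
  -- the maximum `b + 1` is attained in `u` or `v` exactly when the pair is not bounded by `b`
  grind

theorem exists_eq_append_cons_reverse {α : Type*} {L : List α} {r : ℕ} (hL : L.length = 2 * r + 1) :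
    ∃ (u : List α) (m : α) (v : List α), u.length = r ∧ v.length = r ∧ L = u ++ m :: v.reverse :=
  ⟨L.take r, L[r], (L.drop (r + 1)).reverse, by simp; omega, by simp; omega, by
    rw [List.reverse_reverse, ← List.drop_eq_getElem_cons, List.take_append_drop]⟩

theorem exists_eq_append_reverse {α : Type*} {L : List α} {r : ℕ} (hL : L.length = 2 * r) :
    ∃ u v : List α, u.length = r ∧ v.length = r ∧ L = u ++ v.reverse :=
  ⟨L.take r, (L.drop r).reverse, by simp; omega, by simp; omega, by
    rw [List.reverse_reverse, List.take_append_drop]⟩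

theorem bargraphs_odd_eq_image (r b c : ℕ) :
    bargraphs (2 * r + 1) (b + 1) c =
      (fun p => p.1 ++ (b + 1) :: p.2.reverse) '' levelPairs r (b + 1) c := by
  ext L
  constructor
  · intro hL
    obtain ⟨u, m, v, hu, hv, rfl⟩ := exists_eq_append_cons_reverse hL.2.1
    obtain ⟨hp, rfl, -⟩ := (mem_bargraphs_odd hu hv).mp hL
    exact ⟨(u, v), hp, rfl⟩
  · rintro ⟨p, hp, rfl⟩
    exact (mem_bargraphs_odd hp.1.1 hp.2.1.1).mpr ⟨hp, rfl, Nat.succ_pos b⟩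

theorem bargraphs_even_eq_image {r : ℕ} (hr : 1 ≤ r) (b c : ℕ) :
    bargraphs (2 * r) (b + 1) c =
      (fun p => p.1 ++ p.2.reverse) '' (levelPairs r (b + 1) c \ levelPairs r b c) := by
  ext L
  constructor
  · intro hL
    obtain ⟨u, v, hu, hv, rfl⟩ := exists_eq_append_reverse hL.2.1
    exact ⟨(u, v), (mem_bargraphs_even hu hv hr).mp hL, rfl⟩
  · rintro ⟨p, hp, rfl⟩
    exact (mem_bargraphs_even hp.1.1.1 hp.1.2.1.1 hr).mpr hp

theorem finite_setOf_isSortedSeq (r b : ℕ) : {u | IsSortedSeq r b u}.Finite := by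
  refine ((List.finite_length_eq (Fin (b + 1)) r).image (List.map Fin.val)).subset ?_
  rintro u ⟨hlen, -, hbd⟩
  refine ⟨u.map (Fin.ofNat (b + 1)), by simpa using hlen, ?_⟩
  rw [List.map_map]
  conv_rhs => rw [← List.map_id u]
  refine List.map_congr_left fun a ha => ?_
  simp [Nat.mod_eq_of_lt (Nat.lt_succ_of_le (hbd a ha).2)]

theorem finite_levelPairs (r b c : ℕ) : (levelPairs r b c).Finite :=
  ((finite_setOf_isSortedSeq r b).prod (finite_setOf_isSortedSeq r b)).subset
    fun _ hp => ⟨hp.1, hp.2.1⟩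

theorem levelPairs_subset_succ (r b c : ℕ) : levelPairs r b c ⊆ levelPairs r (b + 1) c :=
  fun _ ⟨⟨hl₁, hs₁, hb₁⟩, ⟨hl₂, hs₂, hb₂⟩, hc⟩ =>
    ⟨⟨hl₁, hs₁, fun a ha => ⟨(hb₁ a ha).1, (hb₁ a ha).2.trans (Nat.le_succ b)⟩⟩,
      ⟨hl₂, hs₂, fun a ha => ⟨(hb₂ a ha).1, (hb₂ a ha).2.trans (Nat.le_succ b)⟩⟩, hc⟩

theorem ncard_levelPairs_length_zero (b c : ℕ) :
    (levelPairs 0 b c).ncard = if c = 0 then 1 else 0 := by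
  have hnil : ∀ p : List ℕ × List ℕ, IsSortedSeq 0 b p.1 ∧ IsSortedSeq 0 b p.2 ↔ p = ([], []) :=
    fun p => by constructor <;> simp +contextual [IsSortedSeq, Prod.ext_iff]
  split_ifs with hc
  · rw [Set.ncard_eq_one]
    refine ⟨([], []), Set.ext fun p => ?_⟩
    rw [Set.mem_singleton_iff, ← hnil]
    exact ⟨fun hp => ⟨hp.1, hp.2.1⟩, fun hp => ⟨hp.1, hp.2, by
      rw [List.length_eq_zero_iff.mp hp.1.1, agreeCount_nil_left, hc]⟩⟩
  · suffices levelPairs 0 b c = ∅ by rw [this, Set.ncard_empty]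
    refine Set.eq_empty_of_forall_notMem fun p hp => hc ?_
    rw [← hp.2.2, List.length_eq_zero_iff.mp hp.1.1, agreeCount_nil_left]

theorem levelPairs_bound_zero {r : ℕ} (hr : 1 ≤ r) (c : ℕ) : levelPairs r 0 c = ∅ := by
  refine Set.eq_empty_of_forall_notMem fun p hp => ?_
  obtain ⟨⟨hu, -, hbd⟩, -⟩ := hp
  obtain ⟨a, ha⟩ := List.exists_mem_of_length_pos (hu ▸ hr)
  exact absurd (hbd a ha) (by omega)

noncomputable def bargraphCount (a b c : ℕ) : ℤ := (bargraphs a b c).ncard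

noncomputable def motzkinCount (a b c : ℕ) : ℤ :=
  ({w : List BStep | IsBicoloredGrandMotzkin w ∧ 2 * (w.count BStep.D + w.count BStep.H1) = a ∧
      w.count BStep.U + w.count BStep.H2 = b ∧ h1zero w = c}.ncard : ℤ)

theorem coeff_UBgf (d : Fin 3 →₀ ℕ) :
    MvPowerSeries.coeff d UBgf = bargraphCount (d 0) (d 1) (d 2) := rfl

theorem coeff_T (d : Fin 3 →₀ ℕ) : MvPowerSeries.coeff d T = motzkinCount (d 0) (d 1) (d 2) := rfl

theorem bargraphCount_zero_height (a c : ℕ) : bargraphCount a 0 c = 0 := by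
  suffices bargraphs a 0 c = ∅ by simp [bargraphCount, this]
  refine Set.eq_empty_of_forall_notMem fun L hL => ?_
  obtain ⟨hL, -, hmax, -⟩ := hL
  obtain ⟨hne, hpos, -⟩ := isUB_iff.mp hL
  exact absurd (hpos 0 ((maxComp_eq_iff hne).mp hmax).1) (by omega)

theorem bargraphCount_zero_width (b c : ℕ) : bargraphCount 0 b c = 0 := by
  suffices bargraphs 0 b c = ∅ by simp [bargraphCount, this]
  exact Set.eq_empty_of_forall_notMem fun L hL => hL.1.1 (List.length_eq_zero_iff.mp hL.2.1)

theorem bargraphCount_odd (r b c : ℕ) :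
    bargraphCount (2 * r + 1) (b + 1) c = (levelPairs r (b + 1) c).ncard := by
  rw [bargraphCount, bargraphs_odd_eq_image, Set.InjOn.ncard_image]
  intro p hp q hq h
  obtain ⟨h₁, h₂⟩ := List.append_inj h (hp.1.1.trans hq.1.1.symm)
  exact Prod.ext h₁ (List.reverse_injective (List.cons_injective h₂))

theorem bargraphCount_even {r : ℕ} (hr : 1 ≤ r) (b c : ℕ) :
    bargraphCount (2 * r) (b + 1) c =
      (levelPairs r (b + 1) c).ncard - (levelPairs r b c).ncard := by
  have hsub := levelPairs_subset_succ r b c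
  rw [bargraphCount, bargraphs_even_eq_image hr, Set.InjOn.ncard_image,
    Set.ncard_sdiff hsub (finite_levelPairs r b c),
    Nat.cast_sub (Set.ncard_le_ncard hsub (finite_levelPairs r (b + 1) c))]
  intro p hp q hq h
  obtain ⟨h₁, h₂⟩ := List.append_inj h (hp.1.1.1.trans hq.1.1.1.symm)
  exact Prod.ext h₁ (List.reverse_injective h₂)

theorem motzkinCount_even (r β c : ℕ) :
    motzkinCount (2 * r) β c = (levelPairs r (β + 1) c).ncard := by
  rw [motzkinCount, ← ncard_motzkinPaths]
  congr 3
  ext w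
  simp only [Nat.mul_left_cancel_iff two_pos]

theorem motzkinCount_odd (r β c : ℕ) : motzkinCount (2 * r + 1) β c = 0 := by
  suffices {w : List BStep | IsBicoloredGrandMotzkin w ∧
      2 * (w.count BStep.D + w.count BStep.H1) = 2 * r + 1 ∧
      w.count BStep.U + w.count BStep.H2 = β ∧ h1zero w = c} = ∅ by simp [motzkinCount, this]
  exact Set.eq_empty_of_forall_notMem fun w hw => by have := hw.2.1; omega

theorem bargraphCount_succ (a b c : ℕ) :
    bargraphCount a (b + 1) c =
      motzkinCount a b c + (if a = 0 then 0 else motzkinCount (a - 1) b c) -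
        (if b = 0 then 0 else motzkinCount a (b - 1) c) -
          if a = 0 ∧ b = 0 ∧ c = 0 then 1 else 0 := by
  have hm0 : ∀ β, motzkinCount 0 β c = if c = 0 then 1 else 0 := fun β => by
    rw [← Nat.mul_zero 2, motzkinCount_even, ncard_levelPairs_length_zero]
    split_ifs <;> rfl
  obtain ⟨r, rfl | rfl⟩ := Nat.even_or_odd' a
  · obtain rfl | hr := Nat.eq_zero_or_pos r
    · rw [Nat.mul_zero, bargraphCount_zero_width, hm0, if_pos rfl]
      cases b <;> simp [hm0]
    · rw [bargraphCount_even hr, motzkinCount_even, if_neg (show 2 * r ≠ 0 by omega),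
        show 2 * r - 1 = 2 * (r - 1) + 1 by omega, motzkinCount_odd,
        if_neg (show ¬(2 * r = 0 ∧ b = 0 ∧ c = 0) by omega)]
      cases b with
      | zero => simp [levelPairs_bound_zero hr]
      | succ b => simp [motzkinCount_even]
  · rw [bargraphCount_odd, motzkinCount_odd, if_neg (show 2 * r + 1 ≠ 0 by omega),
      Nat.add_sub_cancel, motzkinCount_even,
      if_neg (show ¬(2 * r + 1 = 0 ∧ b = 0 ∧ c = 0) by omega)]
    cases b <;> simp [motzkinCount_odd]

end UnimodalBargraph

/-- `Σ_{B ∈ 𝒰ℬ} s^{ds(B)} x^{e(B)} y^{n(B)} = y(1+x−y)·T − y` in `ℤ[[x,y,s]]`. -/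
theorem unimodalBargraph_ds_gf :
    UBgf = MvPowerSeries.X 1 * (1 + MvPowerSeries.X 0 - MvPowerSeries.X 1) * T
      - MvPowerSeries.X 1 := by
  open UnimodalBargraph MvPowerSeries in
  have hrhs : (X 1 * (1 + X 0 - X 1) * T - X 1 : MvPowerSeries (Fin 3) ℤ) =
      X 1 * (T + X 0 * T - X 1 * T - 1) := by ring
  ext d
  rw [hrhs, coeff_UBgf, coeff_X_mul]
  split_ifs with hd
  · rw [hd, bargraphCount_zero_height]
  obtain ⟨b, hb⟩ := Nat.exists_eq_succ_of_ne_zero hd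
  simpa [hb, coeff_X_mul, coeff_T, coeff_one, Finsupp.ext_iff, Fin.forall_fin_succ] using
    bargraphCount_succ (d 0) b (d 2)
end

section
/- For every n ≥ 0, the number of grand Motzkin paths of length n with no peaks (no factor UD) equals the number of uneven bicolored grand Motzkin paths of size n, i.e., bicolored grand Motzkin paths M with u(M) + h2(M) + 2(d(M) + h1(M)) = n. -/
/-- Steps of a grand Motzkin path: up, down, horizontal. -/
inductive MStep : Type
  | U | D | H
  deriving DecidableEq

/-- A grand Motzkin path: a word over {U,D,H} with equally many U's and D's
(the path may go below the x-axis). -/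
def IsGrandMotzkin (w : List MStep) : Prop :=
  w.count MStep.U = w.count MStep.D

/-!
A peakless word over `{U, D, H}` is determined by its two projections: the bit word `a` obtained
by erasing the `D`s (reading `U` as `1`, `H` as `0`) and the bit word `b` obtained by erasing the
`U`s (reading `D` as `1`, `H` as `0`). Indeed, between two consecutive `H`s a peakless word reads
`D^i U^j`, so it is recovered by interleaving greedily, `D`s first. Every pair with equally many
`0`s arises this way, and the path is a grand Motzkin path of length `n` exactly when `a` and `b`
have the same length and the same number of `1`s, and `|a|` plus the number of `1`s in `a` is `n`.

A bicolored word is read column by column as a pair of bit words of equal length: the first bit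
marks the steps `D, H1` of weight two, the second one the steps `U, H1`. Balance `u = d` says that
both words have the same number of `1`s, and the size is `|a|` plus the number of `1`s in `a`.
So both sides are in bijection with the same set of pairs of bit words.
-/

def balancedBitPairs (n : ℕ) : Set (List Bool × List Bool) :=
  {p | p.1.length = p.2.length ∧ p.1.count true = p.2.count true
      ∧ p.1.length + p.1.count true = n}

theorem count_false_eq_of_mem_balancedBitPairs {n : ℕ} {p : List Bool × List Bool}
    (hp : p ∈ balancedBitPairs n) : p.1.count false = p.2.count false := by
  have := List.count_true_add_count_false p.1
  have := List.count_true_add_count_false p.2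
  obtain ⟨hlen, htrue, -⟩ := hp
  omega

theorem List.pair_infix_cons_iff {α : Type*} (x y a : α) (l : List α) :
    [x, y] <:+: a :: l ↔ (a = x ∧ l.head? = some y) ∨ [x, y] <:+: l := by
  rw [List.infix_cons_iff, List.cons_prefix_cons, List.singleton_prefix_iff_head?_eq_some, eq_comm]

namespace MStep

theorem count_U_add_count_D_add_count_H (w : List MStep) :
    w.count U + w.count D + w.count H = w.length := by
  induction w with
  | nil => rfl
  | cons x w ih => cases x <;> simp <;> omega

def upBit : MStep → Option Bool
  | U => some true
  | H => some false
  | D => none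

def downBit : MStep → Option Bool
  | D => some true
  | H => some false
  | U => none

def upWord (w : List MStep) : List Bool := w.filterMap upBit

def downWord (w : List MStep) : List Bool := w.filterMap downBit

@[simp] theorem upWord_nil : upWord [] = [] := rfl
@[simp] theorem upWord_cons_U (w : List MStep) : upWord (U :: w) = true :: upWord w := rfl
@[simp] theorem upWord_cons_D (w : List MStep) : upWord (D :: w) = upWord w := rfl
@[simp] theorem upWord_cons_H (w : List MStep) : upWord (H :: w) = false :: upWord w := rfl
@[simp] theorem downWord_nil : downWord [] = [] := rfl
@[simp] theorem downWord_cons_U (w : List MStep) : downWord (U :: w) = downWord w := rfl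
@[simp] theorem downWord_cons_D (w : List MStep) : downWord (D :: w) = true :: downWord w := rfl
@[simp] theorem downWord_cons_H (w : List MStep) : downWord (H :: w) = false :: downWord w := rfl

theorem count_true_upWord (w : List MStep) : (upWord w).count true = w.count U := by
  induction w with
  | nil => rfl
  | cons x w ih => cases x <;> simp [ih]

theorem count_false_upWord (w : List MStep) : (upWord w).count false = w.count H := by
  induction w with
  | nil => rfl
  | cons x w ih => cases x <;> simp [ih]

theorem count_true_downWord (w : List MStep) : (downWord w).count true = w.count D := by
  induction w with
  | nil => rfl
  | cons x w ih => cases x <;> simp [ih]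

theorem count_false_downWord (w : List MStep) : (downWord w).count false = w.count H := by
  induction w with
  | nil => rfl
  | cons x w ih => cases x <;> simp [ih]

/-- The inverse of `w ↦ (upWord w, downWord w)` on peakless words. -/
def merge : List Bool → List Bool → List MStep
  | a, true :: b => D :: merge a b
  | true :: a, b => U :: merge a b
  | false :: a, false :: b => H :: merge a b
  | _, _ => []
  termination_by a b => a.length + b.length

theorem upWord_merge_and_downWord_merge {a b : List Bool} (h : a.count false = b.count false) :
    upWord (merge a b) = a ∧ downWord (merge a b) = b := by
  induction a, b using merge.induct with
  | case1 a b ih => simpa [merge] using ih (by simpa using h)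
  | case2 a b hb ih => simpa [merge.eq_2 b a hb] using ih (by simpa using h)
  | case3 a b ih => simpa [merge] using ih (by simpa using h)
  | case4 a b hb ha hab =>
    rcases a with _ | ⟨_ | _, a⟩ <;> rcases b with _ | ⟨_ | _, b⟩ <;> simp_all [merge]

theorem head?_merge_ne_D {a b : List Bool} (hb : ∀ b', b = true :: b' → False) :
    (merge a b).head? ≠ some D := by
  rcases a with _ | ⟨_ | _, a⟩ <;> rcases b with _ | ⟨_ | _, b⟩ <;> simp_all [merge]

theorem not_UD_infix_merge (a b : List Bool) : ¬ [U, D] <:+: merge a b := by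
  induction a, b using merge.induct with
  | case1 a b ih => simpa [merge, List.pair_infix_cons_iff] using ih
  | case2 a b hb ih =>
    simpa [merge.eq_2 b a hb, List.pair_infix_cons_iff, head?_merge_ne_D hb] using ih
  | case3 a b ih => simpa [merge, List.pair_infix_cons_iff] using ih
  | case4 a b => simp [merge]

theorem downWord_ne_true_cons_of_not_UD_infix {w : List MStep} (hw : ¬ [U, D] <:+: U :: w)
    (b : List Bool) : downWord w = true :: b → False := by
  induction w with
  | nil => simp
  | cons x w ih =>
    cases x
    · exact ih (fun h => hw ((List.pair_infix_cons_iff _ _ _ _).2 (Or.inr h)))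
    · exact fun _ => hw ⟨[], w, rfl⟩
    · simp

theorem merge_upWord_downWord {w : List MStep} (hw : ¬ [U, D] <:+: w) :
    merge (upWord w) (downWord w) = w := by
  induction w with
  | nil => simp [merge]
  | cons x w ih =>
    have hw' : ¬ [U, D] <:+: w := fun h => hw ((List.pair_infix_cons_iff _ _ _ _).2 (Or.inr h))
    cases x
    · simp [merge.eq_2 _ _ (downWord_ne_true_cons_of_not_UD_infix hw), ih hw']
    · simp [merge, ih hw']
    · simp [merge, ih hw']

theorem upWord_downWord_mem_balancedBitPairs_iff {w : List MStep} {n : ℕ} :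
    (upWord w, downWord w) ∈ balancedBitPairs n ↔ IsGrandMotzkin w ∧ w.length = n := by
  have := count_U_add_count_D_add_count_H w
  have := List.count_true_add_count_false (upWord w)
  have := List.count_true_add_count_false (downWord w)
  simp only [balancedBitPairs, IsGrandMotzkin, Set.mem_ofPred_eq, count_true_upWord,
    count_false_upWord, count_true_downWord, count_false_downWord] at *
  omega

theorem bijOn_upWord_downWord (n : ℕ) :
    Set.BijOn (fun w => (upWord w, downWord w))
      {w : List MStep | IsGrandMotzkin w ∧ w.length = n ∧ ¬ [U, D] <:+: w}
      (balancedBitPairs n) := by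
  refine Set.InvOn.bijOn (f' := fun p => merge p.1 p.2) ⟨?_, ?_⟩ ?_ ?_
  · rintro w ⟨-, -, hw⟩
    exact merge_upWord_downWord hw
  · intro p hp
    exact Prod.ext_iff.2 (upWord_merge_and_downWord_merge
      (count_false_eq_of_mem_balancedBitPairs hp))
  · rintro w ⟨hw, hlen, -⟩
    exact upWord_downWord_mem_balancedBitPairs_iff.2 ⟨hw, hlen⟩
  · intro p hp
    obtain ⟨hup, hdown⟩ := upWord_merge_and_downWord_merge
      (count_false_eq_of_mem_balancedBitPairs hp)
    obtain ⟨hw, hlen⟩ :=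
      upWord_downWord_mem_balancedBitPairs_iff.1 (show _ ∈ balancedBitPairs n by rwa [hup, hdown])
    exact ⟨hw, hlen, not_UD_infix_merge p.1 p.2⟩

end MStep

namespace BStep

theorem ofBits_comp_bits : ofBits ∘ bits = id := by
  funext s
  cases s <;> rfl

theorem bits_comp_ofBits : bits ∘ ofBits = id := by
  funext p
  rcases p with ⟨_ | _, _ | _⟩ <;> rfl

def bitWords (m : List BStep) : List Bool × List Bool := (m.map bits).unzip

def ofBitWords (p : List Bool × List Bool) : List BStep := (p.1.zip p.2).map ofBits

theorem ofBitWords_bitWords (m : List BStep) : ofBitWords (bitWords m) = m := by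
  rw [ofBitWords, bitWords, List.zip_unzip, List.map_map, ofBits_comp_bits, List.map_id]

theorem bitWords_ofBitWords {p : List Bool × List Bool} (h : p.1.length = p.2.length) :
    bitWords (ofBitWords p) = p := by
  rw [ofBitWords, bitWords, List.map_map, bits_comp_ofBits, List.map_id, List.unzip_zip h]

theorem count_U_add_count_D_add_count_H1_add_count_H2 (m : List BStep) :
    m.count U + m.count D + m.count H1 + m.count H2 = m.length := by
  induction m with
  | nil => rfl
  | cons x m ih => cases x <;> simp <;> omega

theorem count_true_bitWords_fst (m : List BStep) :
    (bitWords m).1.count true = m.count D + m.count H1 := by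
  induction m with
  | nil => rfl
  | cons x m ih => cases x <;> simp_all [bitWords, bits] <;> omega

theorem count_true_bitWords_snd (m : List BStep) :
    (bitWords m).2.count true = m.count U + m.count H1 := by
  induction m with
  | nil => rfl
  | cons x m ih => cases x <;> simp_all [bitWords, bits] <;> omega

theorem bitWords_mem_balancedBitPairs_iff {m : List BStep} {n : ℕ} :
    bitWords m ∈ balancedBitPairs n ↔ IsBicoloredGrandMotzkin m ∧
      m.count U + m.count H2 + 2 * (m.count D + m.count H1) = n := by
  have := count_U_add_count_D_add_count_H1_add_count_H2 m
  have := count_true_bitWords_fst m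
  have := count_true_bitWords_snd m
  have : (bitWords m).1.length = m.length := by simp [bitWords]
  have : (bitWords m).2.length = m.length := by simp [bitWords]
  simp only [balancedBitPairs, IsBicoloredGrandMotzkin, Set.mem_ofPred_eq]
  omega

theorem bijOn_bitWords (n : ℕ) :
    Set.BijOn bitWords
      {m : List BStep | IsBicoloredGrandMotzkin m ∧
        m.count U + m.count H2 + 2 * (m.count D + m.count H1) = n}
      (balancedBitPairs n) := by
  refine Set.InvOn.bijOn (f' := ofBitWords) ⟨?_, ?_⟩ ?_ ?_
  · intro m _
    exact ofBitWords_bitWords m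
  · intro p hp
    exact bitWords_ofBitWords hp.1
  · intro m hm
    exact bitWords_mem_balancedBitPairs_iff.2 hm
  · intro p hp
    rw [← bitWords_ofBitWords hp.1] at hp
    exact bitWords_mem_balancedBitPairs_iff.1 hp

end BStep

/-- For every `n`, the number of grand Motzkin paths of length `n` with no peak `UD` equals
the number of uneven bicolored grand Motzkin paths of size `n`, i.e. bicolored grand
Motzkin paths with `u + h2 + 2(d + h1) = n`. -/
theorem peakless_grandMotzkin_eq_uneven (n : ℕ) :
    {w : List MStep | IsGrandMotzkin w ∧ w.length = n
        ∧ ¬ [MStep.U, MStep.D] <:+: w}.ncard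
      = {m : List BStep | IsBicoloredGrandMotzkin m ∧
          m.count BStep.U + m.count BStep.H2
            + 2 * (m.count BStep.D + m.count BStep.H1) = n}.ncard := by
  rw [(MStep.bijOn_upWord_downWord n).ncard_eq, (BStep.bijOn_bitWords n).ncard_eq]
end
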